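/- arXiv:math/0605469 — 9 statements merged into one kernel-verified Lean document; each statement's English description precedes it below -/
import Mathlib

section
/- The Cantor cube D^λ = {0,1}^λ with the product topology is I-favorable for every cardinal (index set) λ. -/
open Set TopologicalSpace

variable (X : Type*) [TopologicalSpace X]

/-- A valid move of Player I: a finite family of nonempty open sets. -/
def IMove (A : Set (Set X)) : Prop :=
  A.Finite ∧ ∀ U ∈ A, IsOpen U ∧ U.Nonempty

/-- A valid response of Player II to the family `A`: a finite family of nonempty
open sets such that every member of `A` contains some member of `B`. -/
def IIMove (A B : Set (Set X)) : Prop :=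
  IMove X B ∧ ∀ U ∈ A, ∃ V ∈ B, V ⊆ U

/-- `X` is I-favorable: Player I has a winning strategy in the finite open-open
game. A strategy is a function from histories of Player II's moves to the next
move of Player I; it is winning if for every play in which Player II always
responds validly, each tail union of Player II's families is dense. -/
def IFavorable : Prop :=
  ∃ σ : List (Set (Set X)) → Set (Set X),
    (∀ hist, IMove X (σ hist)) ∧
    ∀ B : ℕ → Set (Set X),
      (∀ n, IIMove X (σ ((List.range n).map B)) (B n)) →
      ∀ k, Dense (⋃ (n : ℕ) (_ : k ≤ n), ⋃₀ B n)

/-- Player II has a winning strategy in the finite open-open game: a function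
from histories of Player I's moves to responses of Player II which are valid,
and such that whenever Player I plays validly, some tail union of Player II's
families fails to be dense. -/
def IIFavorable : Prop :=
  ∃ τ : List (Set (Set X)) → Set (Set X),
    ∀ A : ℕ → Set (Set X), (∀ n, IMove X (A n)) →
      (∀ n, IIMove X (A n) (τ ((List.range (n + 1)).map A))) ∧
      ∃ k, ¬ Dense (⋃ (n : ℕ) (_ : k ≤ n), ⋃₀ τ ((List.range (n + 1)).map A))

/-- `Q` is a π-base for `X`: a family of nonempty open sets such that every
nonempty open set contains a member of the family. -/
def IsPiBase (Q : Set (Set X)) : Prop :=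
  (∀ U ∈ Q, IsOpen U ∧ U.Nonempty) ∧
  ∀ V : Set X, IsOpen V → V.Nonempty → ∃ U ∈ Q, U ⊆ V

/-- `C` is a club filter with respect to the π-base `Q`. -/
def IsClubFilter (Q : Set (Set X)) (C : Set (Set (Set X))) : Prop :=
  (∀ P ∈ C, P.Countable ∧ P ⊆ Q) ∧
  (∀ P : ℕ → Set (Set X), (∀ n, P n ∈ C) → Monotone P → (⋃ n, P n) ∈ C) ∧
  (∀ A : Set (Set X), A.Countable → A ⊆ Q → ∃ P ∈ C, A ⊆ P) ∧
  (∀ V : Set X, IsOpen V → V.Nonempty →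
    ∀ P ∈ C, ∃ W ∈ P, ∀ U ∈ P, U ⊆ W → (U ∩ V).Nonempty)

section CantorAux

variable {lam : Type*}
open scoped Classical

/-- Basic cylinder: points agreeing with `f` on the finite set `J`. -/
def cyl (J : Finset lam) (f : lam → Bool) : Set (lam → Bool) :=
  {x | ∀ i ∈ J, x i = f i}

lemma cyl_isOpen (J : Finset lam) (f : lam → Bool) : IsOpen (cyl J f) := by
  have h : cyl J f = Set.pi ↑J (fun i => {f i}) := by
    ext x; simp [cyl, Set.mem_pi]
  rw [h]
  exact isOpen_set_pi J.finite_toSet (fun i _ => isOpen_discrete _)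

lemma mem_cyl_self (J : Finset lam) (f : lam → Bool) : f ∈ cyl J f :=
  fun _ _ => rfl

lemma exists_cyl_subset {V : Set (lam → Bool)} (hV : IsOpen V) {x : lam → Bool}
    (hx : x ∈ V) : ∃ S : Finset lam, cyl S x ⊆ V := by
  rw [isOpen_pi_iff] at hV
  obtain ⟨I, u, hu, hpi⟩ := hV x hx
  refine ⟨I, fun y hy => hpi ?_⟩
  intro i hi
  have := hy i hi
  rw [this]
  exact (hu i hi).2

/-- Choice of a cylinder contained in a set (junk value otherwise). -/
noncomputable def pick (V : Set (lam → Bool)) : Finset lam × (lam → Bool) :=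
  if h : ∃ p : Finset lam × (lam → Bool), cyl p.1 p.2 ⊆ V then h.choose
  else (∅, fun _ => false)

lemma pick_spec {V : Set (lam → Bool)} (hV : IsOpen V) (hne : V.Nonempty) :
    cyl (pick V).1 (pick V).2 ⊆ V := by
  obtain ⟨x, hx⟩ := hne
  obtain ⟨S, hS⟩ := exists_cyl_subset hV hx
  have h : ∃ p : Finset lam × (lam → Bool), cyl p.1 p.2 ⊆ V := ⟨(S, x), hS⟩
  rw [pick, dif_pos h]
  exact h.choose_spec

/-- One step of coordinate collection. -/
noncomputable def step (J : Finset lam) (Bs : Set (Set (lam → Bool))) : Finset lam :=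
  if h : Bs.Finite then J ∪ h.toFinset.biUnion (fun V => (pick V).1) else J

lemma subset_step (J : Finset lam) (Bs : Set (Set (lam → Bool))) : J ⊆ step J Bs := by
  classical
  rw [step]
  split
  · exact Finset.subset_union_left
  · exact subset_rfl

lemma pick_subset_step (J : Finset lam) {Bs : Set (Set (lam → Bool))}
    (hBs : Bs.Finite) {V : Set (lam → Bool)} (hV : V ∈ Bs) :
    (pick V).1 ⊆ step J Bs := by
  classical
  rw [step, dif_pos hBs]
  intro i hi
  exact Finset.mem_union_right _ (Finset.mem_biUnion.2 ⟨V, hBs.mem_toFinset.2 hV, hi⟩)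

/-- Coordinates collected along a history. -/
noncomputable def Jfun (hist : List (Set (Set (lam → Bool)))) : Finset lam :=
  hist.foldl step ∅

/-- Player I's strategy: all cylinders over the collected coordinates. -/
noncomputable def sigma (hist : List (Set (Set (lam → Bool)))) : Set (Set (lam → Bool)) :=
  {C | ∃ f : lam → Bool, C = cyl (Jfun hist) f}

lemma sigma_finite (hist : List (Set (Set (lam → Bool)))) : (sigma hist).Finite := by
  classical
  have h : sigma hist ⊆ Set.range
      (fun g : (↥(Jfun hist) → Bool) =>
        cyl (Jfun hist) (fun i => if hi : i ∈ Jfun hist then g ⟨i, hi⟩ else false)) := by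
    rintro C ⟨f, rfl⟩
    refine ⟨fun j => f j, ?_⟩
    ext x
    constructor <;> intro hx i hi <;> have := hx i hi <;> simp [hi] at this ⊢ <;> simpa using this
  exact (Set.finite_range _).subset h

end CantorAux

/-- The Cantor cube `D^λ = {0,1}^λ` with the product topology is I-favorable. -/
theorem cantorCube_iFavorable (lam : Type*) : IFavorable (lam → Bool) := by
  classical
  refine ⟨sigma, fun hist => ⟨sigma_finite hist, ?_⟩, ?_⟩
  · rintro U ⟨f, rfl⟩
    exact ⟨cyl_isOpen _ _, ⟨f, mem_cyl_self _ _⟩⟩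
  · intro B hplay k
    set Jn : ℕ → Finset lam := fun n => Jfun ((List.range n).map B) with hJn
    have hrec : ∀ n, Jn (n + 1) = step (Jn n) (B n) := by
      intro n
      simp [hJn, Jfun, List.range_succ]
    have hmono : ∀ {a b : ℕ}, a ≤ b → Jn a ⊆ Jn b := by
      intro a b hab
      induction b with
      | zero => simpa [Nat.le_zero.1 hab]
      | succ b ih =>
        rcases Nat.lt_or_ge a (b + 1) with h | h
        · exact (ih (Nat.lt_succ_iff.1 h)).trans ((hrec b).symm ▸ subset_step _ _)
        · have : a = b + 1 := le_antisymm hab h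
          simp [this]
    rw [dense_iff_inter_open]
    intro W hW hWne
    obtain ⟨x, hxW⟩ := hWne
    obtain ⟨F, hF⟩ := exists_cyl_subset hW hxW
    set g : lam → ℕ := fun i => if h : ∃ n, i ∈ Jn n then Nat.find h else 0 with hg
    set m : ℕ := max k (F.sup g) with hm
    have hk : k ≤ m := le_max_left _ _
    have hFm : ∀ i ∈ F, (∃ n, i ∈ Jn n) → i ∈ Jn m := by
      intro i hi h
      refine hmono ?_ (Nat.find_spec h)
      calc Nat.find h = g i := by simp [hg, dif_pos h]
        _ ≤ F.sup g := Finset.le_sup hi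
        _ ≤ m := le_max_right _ _
    obtain ⟨V, hVB, hVsub⟩ := (hplay m).2 (cyl (Jn m) x) ⟨x, rfl⟩
    have hBfin : (B m).Finite := (hplay m).1.1
    obtain ⟨hVopen, hVne⟩ := (hplay m).1.2 V hVB
    have hpick := pick_spec hVopen hVne
    have hSsub : (pick V).1 ⊆ Jn (m + 1) := by
      rw [hrec m]
      exact pick_subset_step _ hBfin hVB
    set z : lam → Bool := fun i => if i ∈ (pick V).1 then (pick V).2 i else x i with hz
    have hz1 : z ∈ cyl (pick V).1 (pick V).2 := by
      intro i hi; simp [hz, if_pos hi]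
    have hzV : z ∈ V := hpick hz1
    have hzJm : z ∈ cyl (Jn m) x := hVsub hzV
    have hzF : z ∈ cyl F x := by
      intro i hi
      by_cases hiS : i ∈ (pick V).1
      · exact hzJm i (hFm i hi ⟨m + 1, hSsub hiS⟩)
      · simp [hz, if_neg hiS]
    exact ⟨z, hF hzF, Set.mem_iUnion.2 ⟨m, Set.mem_iUnion.2 ⟨hk, ⟨V, hVB, hzV⟩⟩⟩⟩
end

section
/- If a topological space has uncountable cellularity (i.e., there exists an uncountable family of pairwise disjoint nonempty open sets), then it is not I-favorable: Player II has a winning strategy in the finite open-open game. -/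
open Set TopologicalSpace

variable (X : Type*) [TopologicalSpace X]

open Classical in
noncomputable def resp (Wfam : Set (Set X)) (U : Set X) : Set X :=
  if h : ∃ W' ∈ Wfam, (U ∩ W').Nonempty then U ∩ h.choose else U

lemma resp_subset (Wfam : Set (Set X)) (U : Set X) : resp X Wfam U ⊆ U := by
  unfold resp; split_ifs with h
  · exact inter_subset_left
  · exact subset_rfl

lemma resp_spec (Wfam : Set (Set X)) (hW : ∀ U ∈ Wfam, IsOpen U ∧ U.Nonempty)
    (U : Set X) (hU : IsOpen U) (hne : U.Nonempty) :
    IsOpen (resp X Wfam U) ∧ (resp X Wfam U).Nonempty := by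
  unfold resp; split_ifs with h
  · exact ⟨hU.inter (hW _ h.choose_spec.1).1, h.choose_spec.2⟩
  · exact ⟨hU, hne⟩

lemma resp_subsingleton (Wfam : Set (Set X))
    (hdisj : ∀ U ∈ Wfam, ∀ V ∈ Wfam, U ≠ V → U ∩ V = ∅) (U : Set X) :
    ∀ W₁ ∈ Wfam, ∀ W₂ ∈ Wfam, (resp X Wfam U ∩ W₁).Nonempty →
      (resp X Wfam U ∩ W₂).Nonempty → W₁ = W₂ := by
  intro W₁ h₁ W₂ h₂ hn₁ hn₂
  unfold resp at hn₁ hn₂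
  split_ifs at hn₁ hn₂ with hex
  · have key : ∀ W' ∈ Wfam, ((U ∩ hex.choose) ∩ W').Nonempty → W' = hex.choose := by
      intro W' hW' ⟨x, hx⟩
      by_contra hne
      have := hdisj _ hW' _ hex.choose_spec.1 hne
      exact absurd this (Set.Nonempty.ne_empty ⟨x, hx.2, hx.1.2⟩)
    rw [key W₁ h₁ hn₁, key W₂ h₂ hn₂]
  · exact absurd ⟨W₁, h₁, hn₁⟩ hex

/-- Player II's canonical response to a whole family. -/
noncomputable def respSet (Wfam : Set (Set X)) (A : Set (Set X)) : Set (Set X) :=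
  resp X Wfam '' A

lemma respSet_IIMove (Wfam : Set (Set X)) (hW : ∀ U ∈ Wfam, IsOpen U ∧ U.Nonempty)
    (A : Set (Set X)) (hA : IMove X A) : IIMove X A (respSet X Wfam A) := by
  refine ⟨⟨hA.1.image _, ?_⟩, ?_⟩
  · rintro V ⟨U, hU, rfl⟩
    exact resp_spec X Wfam hW U (hA.2 U hU).1 (hA.2 U hU).2
  · intro U hU
    exact ⟨resp X Wfam U, mem_image_of_mem _ hU, resp_subset X Wfam U⟩

lemma tail_not_dense (Wfam : Set (Set X)) (hunc : ¬ Wfam.Countable)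
    (hW : ∀ U ∈ Wfam, IsOpen U ∧ U.Nonempty)
    (hdisj : ∀ U ∈ Wfam, ∀ V ∈ Wfam, U ≠ V → U ∩ V = ∅)
    (B : ℕ → Set (Set X))
    (hB : ∀ n, (B n).Finite ∧ ∀ V ∈ B n, ∃ U, V = resp X Wfam U)
    (k : ℕ) : ¬ Dense (⋃ (n : ℕ) (_ : k ≤ n), ⋃₀ B n) := by
  set P : Set (Set X) := ⋃ n, B n with hP
  have hPc : P.Countable := countable_iUnion fun n => (hB n).1.countable
  set T : Set (Set X) := ⋃ V ∈ P, {W' | W' ∈ Wfam ∧ (V ∩ W').Nonempty} with hT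
  have htc : T.Countable := by
    refine hPc.biUnion fun V hV => ?_
    obtain ⟨n, hn⟩ := mem_iUnion.1 hV
    obtain ⟨U, rfl⟩ := (hB n).2 V hn
    exact Set.Subsingleton.countable fun W₁ h₁ W₂ h₂ =>
      resp_subsingleton X Wfam hdisj U W₁ h₁.1 W₂ h₂.1 h₁.2 h₂.2
  have hns : ¬ Wfam ⊆ T := fun hs => hunc (htc.mono hs)
  obtain ⟨W₀, hW₀, hW₀n⟩ := not_subset.1 hns
  intro hd
  obtain ⟨x, hxW, hxS⟩ := hd.inter_open_nonempty W₀ (hW _ hW₀).1 (hW _ hW₀).2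
  simp only [mem_iUnion] at hxS
  obtain ⟨n, -, hxB⟩ := hxS
  obtain ⟨V, hVB, hxV⟩ := hxB
  exact hW₀n (mem_biUnion (mem_iUnion.2 ⟨n, hVB⟩) ⟨hW₀, ⟨x, hxV, hxW⟩⟩)

/-- The history of Player II's responses when playing the canonical strategy
against Player I's strategy `σ`. -/
noncomputable def playHist (Wfam : Set (Set X)) (σ : List (Set (Set X)) → Set (Set X)) :
    ℕ → List (Set (Set X))
  | 0 => []
  | n + 1 => playHist Wfam σ n ++ [respSet X Wfam (σ (playHist Wfam σ n))]

lemma playHist_eq (Wfam : Set (Set X)) (σ : List (Set (Set X)) → Set (Set X)) :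
    ∀ n, (List.range n).map (fun m => respSet X Wfam (σ (playHist X Wfam σ m)))
      = playHist X Wfam σ n := by
  intro n
  induction n with
  | zero => simp [playHist]
  | succ n ih => simp [List.range_succ, playHist, ih]

lemma getLastD_range_map {α : Type*} (A : ℕ → α) (d : α) (n : ℕ) :
    ((List.range (n + 1)).map A).getLastD d = A n := by
  simp [List.range_succ]

/-- A space of uncountable cellularity is not I-favorable: Player II has a
winning strategy in the finite open-open game. -/
theorem not_iFavorable_of_uncountable_cellularity (X : Type*)
    [TopologicalSpace X]
    (h : ∃ W : Set (Set X), ¬ W.Countable ∧ (∀ U ∈ W, IsOpen U ∧ U.Nonempty) ∧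
      ∀ U ∈ W, ∀ V ∈ W, U ≠ V → U ∩ V = ∅) :
    ¬ IFavorable X ∧ IIFavorable X := by
  obtain ⟨Wfam, hunc, hW, hdisj⟩ := h
  constructor
  · rintro ⟨σ, hσ1, hσ2⟩
    set B : ℕ → Set (Set X) := fun n => respSet X Wfam (σ (playHist X Wfam σ n)) with hBdef
    have hmap : ∀ n, (List.range n).map B = playHist X Wfam σ n :=
      playHist_eq X Wfam σ
    have hvalid : ∀ n, IIMove X (σ ((List.range n).map B)) (B n) := by
      intro n; rw [hmap]
      exact respSet_IIMove X Wfam hW _ (hσ1 _)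
    refine tail_not_dense X Wfam hunc hW hdisj B (fun n => ?_) 0 (hσ2 B hvalid 0)
    refine ⟨(hσ1 _).1.image _, ?_⟩
    rintro V ⟨U, -, rfl⟩
    exact ⟨U, rfl⟩
  · refine ⟨fun hist => respSet X Wfam (hist.getLastD ∅), fun A hA => ?_⟩
    have hlast : ∀ n, ((List.range (n + 1)).map A).getLastD ∅ = A n :=
      fun n => getLastD_range_map A ∅ n
    constructor
    · intro n
      show IIMove X (A n) (respSet X Wfam (((List.range (n + 1)).map A).getLastD ∅))
      rw [hlast n]
      exact respSet_IIMove X Wfam hW _ (hA n)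
    · refine ⟨0, tail_not_dense X Wfam hunc hW hdisj
        (fun n => respSet X Wfam (((List.range (n + 1)).map A).getLastD ∅)) (fun n => ?_) 0⟩
      simp only [hlast]
      refine ⟨(hA n).1.image _, ?_⟩
      rintro V ⟨U, -, rfl⟩
      exact ⟨U, rfl⟩
end

section
/- For each sequence (A_0, A_1, …) of finite nonempty families of nonempty open subsets of the Cantor cube D^λ with λ uncountable, there exists a sequence (B_0, B_1, …) of finite nonempty families of nonempty open subsets of D^λ such that each B_n refines A_n (every member of B_n is contained in some member of A_n, and every member of A_n contains some member of B_n), yet the union ∪{∪B_n : n ∈ ω} is not dense in D^λ. -/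
open Set TopologicalSpace

variable (X : Type*) [TopologicalSpace X]

/-- On an uncountable Cantor cube, no sequence of Player I moves fixed in
advance can win: for each sequence `(A n)` of finite nonempty families of
nonempty open sets there is a sequence `(B n)` of finite nonempty families of
nonempty open sets, each refining the corresponding `A n`, whose total union is
not dense. -/
theorem cantorCube_no_fixed_strategy (lam : Type*) [Uncountable lam]
    (A : ℕ → Set (Set (lam → Bool)))
    (hA : ∀ n, (A n).Nonempty ∧ IMove (lam → Bool) (A n)) :
    ∃ B : ℕ → Set (Set (lam → Bool)),
      (∀ n, (B n).Nonempty ∧ IMove (lam → Bool) (B n) ∧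
        (∀ V ∈ B n, ∃ U ∈ A n, V ⊆ U) ∧ (∀ U ∈ A n, ∃ V ∈ B n, V ⊆ U)) ∧
      ¬ Dense (⋃ n, ⋃₀ B n) := by
  -- For each `n` and `U ∈ A n`, choose a basic cylinder inside `U`.
  have h : ∀ n, ∀ U ∈ A n, ∃ (x : lam → Bool) (F : Finset lam),
      {y : lam → Bool | ∀ i ∈ F, y i = x i} ⊆ U := by
    classical
    intro n U hU
    obtain ⟨ho, x, hx⟩ := (hA n).2.2 U hU
    rw [isOpen_pi_iff] at ho
    obtain ⟨I, u, hu, hsub⟩ := ho x hx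
    exact ⟨x, I, fun y hy => hsub fun i hi => by
      rw [Set.mem_setOf_eq.mp hy i hi]; exact (hu i hi).2⟩
  classical
  choose x F hF using h
  -- the countable set of used coordinates
  set S : Set lam := ⋃ n, ⋃ U ∈ A n, ⋃ (h : U ∈ A n), (F n U h : Set lam) with hS
  have hScount : S.Countable := by
    refine Set.countable_iUnion fun n => Set.Countable.biUnion
      ((hA n).2.1.countable) fun U hU => Set.countable_iUnion fun h => (F n U h).countable_toSet
  obtain ⟨a, ha⟩ : ∃ a : lam, a ∉ S := by
    by_contra hc
    push_neg at hc
    have : (Set.univ : Set lam).Countable := by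
      have : S = Set.univ := Set.eq_univ_of_forall hc
      rwa [this] at hScount
    exact (Set.not_countable_univ) this
  have haF : ∀ n U (h : U ∈ A n), a ∉ F n U h := by
    intro n U h hmem
    exact ha (Set.mem_iUnion.mpr ⟨n, Set.mem_biUnion h (Set.mem_iUnion.mpr ⟨h, hmem⟩)⟩)
  -- the shrunk cylinders
  set cyl : ∀ n U, U ∈ A n → Set (lam → Bool) :=
    fun n U h => {y | (∀ i ∈ F n U h, y i = x n U h i) ∧ y a = true} with hcyl
  refine ⟨fun n => {W | ∃ U, ∃ h : U ∈ A n, cyl n U h = W}, fun n => ?_, ?_⟩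
  · obtain ⟨U0, hU0⟩ := (hA n).1
    have hopen : ∀ U (h : U ∈ A n), IsOpen (cyl n U h) := by
      intro U h
      have h1 : IsOpen {y : lam → Bool | ∀ i ∈ F n U h, y i = x n U h i} := by
        have he : {y : lam → Bool | ∀ i ∈ F n U h, y i = x n U h i}
            = Set.pi (↑(F n U h)) (fun i => ({x n U h i} : Set Bool)) := by
          ext y; simp [Set.mem_pi]
        rw [he]
        exact isOpen_set_pi (F n U h).finite_toSet fun i _ => isOpen_discrete _
      have h2 : IsOpen {y : lam → Bool | y a = true} := by
        have he2 : {y : lam → Bool | y a = true} = (fun y : lam → Bool => y a) ⁻¹' ({true} : Set Bool) := rfl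
        rw [he2]
        exact (continuous_apply a).isOpen_preimage _ (isOpen_discrete _)
      exact h1.inter h2
    have hne : ∀ U (h : U ∈ A n), (cyl n U h).Nonempty := by
      intro U h
      refine ⟨fun i => if hi : i ∈ F n U h then x n U h i else true, fun i hi => by simp [hi], ?_⟩
      simp [haF n U h]
    have hsub : ∀ U (h : U ∈ A n), cyl n U h ⊆ U := by
      intro U h y hy; exact hF n U h hy.1
    refine ⟨⟨cyl n U0 hU0, U0, hU0, rfl⟩, ⟨?_, ?_⟩, ?_, ?_⟩
    · exact Set.Finite.dependent_image (hA n).2.1 (cyl n)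
    · rintro W ⟨U, h, rfl⟩; exact ⟨hopen U h, hne U h⟩
    · rintro W ⟨U, h, rfl⟩; exact ⟨U, h, hsub U h⟩
    · intro U h; exact ⟨cyl n U h, ⟨U, h, rfl⟩, hsub U h⟩
  · intro hd
    have hsub : (⋃ n, ⋃₀ {W | ∃ U, ∃ h : U ∈ A n, cyl n U h = W}) ⊆ {y : lam → Bool | y a = true} := by
      rintro y hy
      obtain ⟨_, ⟨n, rfl⟩, W, ⟨U, h, rfl⟩, hyW⟩ := hy
      exact hyW.2
    have hclosed : IsClosed {y : lam → Bool | y a = true} :=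
      isClosed_eq (continuous_apply a) continuous_const
    have := hd.closure_eq
    have hmem : (fun _ => false : lam → Bool) ∈ closure (⋃ n, ⋃₀ {W | ∃ U, ∃ h : U ∈ A n, cyl n U h = W}) := by
      rw [this]; trivial
    have : (fun _ => false : lam → Bool) ∈ {y : lam → Bool | y a = true} :=
      hclosed.closure_subset_iff.mpr hsub hmem
    simp at this
end

section
/- If a topological space X has a club filter, then X is I-favorable (Player I has a winning strategy in the finite open-open game). -/
open Set TopologicalSpace

variable (X : Type*) [TopologicalSpace X]

section ClubAux

variable {X : Type*} [TopologicalSpace X] {Q : Set (Set X)} {C : Set (Set (Set X))}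

attribute [local instance] Classical.propDecidable

/-- Choose a π-base element below an open nonempty set. -/
noncomputable def clubPick (hQ : IsPiBase X Q) (V : Set X) : Set X :=
  if h : IsOpen V ∧ V.Nonempty then (hQ.2 V h.1 h.2).choose else ∅

lemma clubPick_spec (hQ : IsPiBase X Q) {V : Set X} (h1 : IsOpen V) (h2 : V.Nonempty) :
    clubPick hQ V ∈ Q ∧ clubPick hQ V ⊆ V := by
  rw [clubPick, dif_pos ⟨h1, h2⟩]
  exact ⟨(hQ.2 V h1 h2).choose_spec.1, (hQ.2 V h1 h2).choose_spec.2⟩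

/-- π-base elements refining the members of a family. -/
noncomputable def clubQs (hQ : IsPiBase X Q) (B : Set (Set X)) : Set (Set X) :=
  if _ : B.Countable then clubPick hQ '' {V ∈ B | IsOpen V ∧ V.Nonempty} else ∅

lemma clubQs_countable (hQ : IsPiBase X Q) (B : Set (Set X)) : (clubQs hQ B).Countable := by
  rw [clubQs]
  split
  · exact Set.Countable.image (Set.Countable.mono (sep_subset _ _) ‹_›) _
  · exact countable_empty

lemma clubQs_subset (hQ : IsPiBase X Q) (B : Set (Set X)) : clubQs hQ B ⊆ Q := by
  rw [clubQs]
  split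
  · rintro _ ⟨V, ⟨_, hVo, hVn⟩, rfl⟩
    exact (clubPick_spec hQ hVo hVn).1
  · exact empty_subset _

lemma mem_clubQs (hQ : IsPiBase X Q) {B : Set (Set X)} {V : Set X} (hc : B.Countable)
    (hV : V ∈ B) (h1 : IsOpen V) (h2 : V.Nonempty) : clubPick hQ V ∈ clubQs hQ B := by
  rw [clubQs, dif_pos hc]
  exact mem_image_of_mem _ ⟨hV, h1, h2⟩

/-- One step of Player I's bookkeeping: enlarge `P` to a member of `C` containing
refinements of the members of `B`. -/
noncomputable def clubNext (hQ : IsPiBase X Q) (hC : IsClubFilter X Q C)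
    (P B : Set (Set X)) : Set (Set X) :=
  if h : (P ∪ clubQs hQ B).Countable ∧ (P ∪ clubQs hQ B) ⊆ Q then
    (hC.2.2.1 _ h.1 h.2).choose else P

lemma clubNext_spec (hQ : IsPiBase X Q) (hC : IsClubFilter X Q C) {P : Set (Set X)}
    (hP : P ∈ C) (B : Set (Set X)) :
    clubNext hQ hC P B ∈ C ∧ P ∪ clubQs hQ B ⊆ clubNext hQ hC P B := by
  have h : (P ∪ clubQs hQ B).Countable ∧ (P ∪ clubQs hQ B) ⊆ Q :=
    ⟨((hC.1 P hP).1).union (clubQs_countable hQ B),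
     union_subset (hC.1 P hP).2 (clubQs_subset hQ B)⟩
  rw [clubNext, dif_pos h]
  exact ⟨(hC.2.2.1 _ h.1 h.2).choose_spec.1, (hC.2.2.1 _ h.1 h.2).choose_spec.2⟩

/-- An initial member of the club filter. -/
noncomputable def clubP0 (hC : IsClubFilter X Q C) : Set (Set X) :=
  (hC.2.2.1 ∅ countable_empty (empty_subset Q)).choose

lemma clubP0_mem (hC : IsClubFilter X Q C) : clubP0 hC ∈ C :=
  (hC.2.2.1 ∅ countable_empty (empty_subset Q)).choose_spec.1

/-- The member of `C` built by Player I after a given history. -/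
noncomputable def clubPF (hQ : IsPiBase X Q) (hC : IsClubFilter X Q C)
    (l : List (Set (Set X))) : Set (Set X) :=
  l.foldl (clubNext hQ hC) (clubP0 hC)

lemma clubFoldl_mem (hQ : IsPiBase X Q) (hC : IsClubFilter X Q C)
    (l : List (Set (Set X))) :
    ∀ P ∈ C, l.foldl (clubNext hQ hC) P ∈ C ∧ P ⊆ l.foldl (clubNext hQ hC) P := by
  induction l with
  | nil => exact fun P hP => ⟨hP, subset_rfl⟩
  | cons b t ih =>
    intro P hP
    have h1 := clubNext_spec hQ hC hP b
    have h2 := ih _ h1.1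
    exact ⟨h2.1, (subset_union_left.trans h1.2).trans h2.2⟩

lemma clubPF_mem (hQ : IsPiBase X Q) (hC : IsClubFilter X Q C) (l : List (Set (Set X))) :
    clubPF hQ hC l ∈ C :=
  (clubFoldl_mem hQ hC l _ (clubP0_mem hC)).1

lemma clubPF_append (hQ : IsPiBase X Q) (hC : IsClubFilter X Q C)
    (l : List (Set (Set X))) (b : Set (Set X)) :
    clubPF hQ hC (l ++ [b]) = clubNext hQ hC (clubPF hQ hC l) b := by
  simp [clubPF, List.foldl_append]

lemma clubPF_prefix (hQ : IsPiBase X Q) (hC : IsClubFilter X Q C)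
    (l l' : List (Set (Set X))) : clubPF hQ hC l ⊆ clubPF hQ hC (l ++ l') := by
  rw [clubPF, clubPF, List.foldl_append]
  exact (clubFoldl_mem hQ hC l' _ (clubPF_mem hQ hC l)).2

/-- An enumeration of a countable nonempty family. -/
noncomputable def clubEnum (S : Set (Set X)) : ℕ → Set X :=
  if h : S.Countable ∧ S.Nonempty then (h.1.exists_eq_range h.2).choose else fun _ => ∅

lemma clubEnum_spec {S : Set (Set X)} (h1 : S.Countable) (h2 : S.Nonempty) :
    S = Set.range (clubEnum S) := by
  rw [clubEnum, dif_pos ⟨h1, h2⟩]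
  exact (h1.exists_eq_range h2).choose_spec

/-- Player I's strategy: play the finite family of the first `n` elements of the
enumerations of the first `n` approximations, where `n` is the history length. -/
noncomputable def clubStrat (hQ : IsPiBase X Q) (hC : IsClubFilter X Q C)
    (hist : List (Set (Set X))) : Set (Set X) :=
  (fun p : ℕ × ℕ => clubEnum (clubPF hQ hC (hist.take p.1)) p.2) ''
    (Set.Iic hist.length ×ˢ Set.Iic hist.length)

end ClubAux

/-- If a topological space has a club filter (with respect to some π-base),
then it is I-favorable. -/
theorem iFavorable_of_clubFilter (X : Type*) [TopologicalSpace X]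
    (Q : Set (Set X)) (hQ : IsPiBase X Q)
    (h : ∃ C : Set (Set (Set X)), IsClubFilter X Q C) : IFavorable X := by
  obtain ⟨C, hC⟩ := h
  by_cases hne : Nonempty X
  case neg =>
    refine ⟨fun _ => ∅, fun _ => ⟨finite_empty, fun U hU => absurd hU (notMem_empty U)⟩,
      fun B _ k => fun x => absurd ⟨x⟩ hne⟩
  haveI : Nonempty X := hne
  -- every member of C is nonempty
  have hCne : ∀ P ∈ C, P.Nonempty := by
    intro P hP
    obtain ⟨W, hW, -⟩ := hC.2.2.2 univ isOpen_univ univ_nonempty P hP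
    exact ⟨W, hW⟩
  -- members of the strategy belong to the current approximation
  have hmemPF : ∀ hist, ∀ U ∈ clubStrat hQ hC hist, U ∈ clubPF hQ hC hist := by
    rintro hist _ ⟨⟨i, j⟩, ⟨_, _⟩, rfl⟩
    have hm := clubPF_mem hQ hC (hist.take i)
    have hrange := clubEnum_spec (hC.1 _ hm).1 (hCne _ hm)
    have hmem : clubEnum (clubPF hQ hC (hist.take i)) j ∈ clubPF hQ hC (hist.take i) :=
      hrange.superset (mem_range_self j)
    have := clubPF_prefix hQ hC (hist.take i) (hist.drop i) hmem
    rwa [List.take_append_drop] at this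
  refine ⟨clubStrat hQ hC, ?_, ?_⟩
  · -- the strategy always plays valid moves
    intro hist
    refine ⟨Set.Finite.image _ (((finite_Iic _).prod (finite_Iic _))), fun U hU => ?_⟩
    have hQU : U ∈ Q := (hC.1 _ (clubPF_mem hQ hC hist)).2 (hmemPF hist U hU)
    exact hQ.1 U hQU
  · -- the strategy is winning
    intro B hB k
    rw [dense_iff_inter_open]
    intro V hVo hVn
    set Pn : ℕ → Set (Set X) := fun n => clubPF hQ hC ((List.range n).map B) with hPn
    have hPmem : ∀ n, Pn n ∈ C := fun n => clubPF_mem hQ hC _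
    have hsucc : ∀ n, (List.range (n + 1)).map B = (List.range n).map B ++ [B n] := by
      intro n; rw [List.range_succ, List.map_append]; rfl
    have hmono : Monotone Pn := by
      refine monotone_nat_of_le_succ fun n => ?_
      rw [hPn]; dsimp only; rw [hsucc n]
      exact clubPF_prefix hQ hC _ _
    have hPinf : (⋃ n, Pn n) ∈ C := hC.2.1 Pn hPmem hmono
    obtain ⟨W, hW, hWall⟩ := hC.2.2.2 V hVo hVn _ hPinf
    obtain ⟨m, hWm⟩ := mem_iUnion.1 hW
    have hEnum := clubEnum_spec (hC.1 _ (hPmem m)).1 (hCne _ (hPmem m))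
    obtain ⟨j, hj⟩ : ∃ j, clubEnum (Pn m) j = W := by rw [hEnum] at hWm; exact hWm
    set n := max k (max m j) with hn
    have hmn : m ≤ n := le_max_of_le_right (le_max_left m j)
    have hjn : j ≤ n := le_max_of_le_right (le_max_right m j)
    have hkn : k ≤ n := le_max_left _ _
    -- W is played by Player I at stage n
    have htake : ((List.range n).map B).take m = (List.range m).map B := by
      rw [← List.map_take, List.take_range, Nat.min_eq_left hmn]
    have hWin : W ∈ clubStrat hQ hC ((List.range n).map B) := by
      refine ⟨(m, j), ⟨?_, ?_⟩, ?_⟩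
      · simpa using hmn
      · simpa using hjn
      · dsimp only; rw [htake]; exact hj
    obtain ⟨hBn, hresp⟩ := hB n
    obtain ⟨V', hV'B, hV'W⟩ := hresp W hWin
    have hV'on := hBn.2 V' hV'B
    have hpick := clubPick_spec hQ hV'on.1 hV'on.2
    have hqs : clubPick hQ V' ∈ clubQs hQ (B n) :=
      mem_clubQs hQ hBn.1.countable hV'B hV'on.1 hV'on.2
    have hPn1 : clubPick hQ V' ∈ Pn (n + 1) := by
      have hstep := (clubNext_spec hQ hC (hPmem n) (B n)).2 (Or.inr hqs)
      rw [hPn]; dsimp only; rw [hsucc n, clubPF_append]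
      exact hstep
    have hUinf : clubPick hQ V' ∈ ⋃ i, Pn i := mem_iUnion.2 ⟨n + 1, hPn1⟩
    obtain ⟨x, hxU, hxV⟩ := hWall _ hUinf (hpick.2.trans hV'W)
    exact ⟨x, hxV, mem_iUnion.2 ⟨n, mem_iUnion.2 ⟨hkn, ⟨V', hV'B, hpick.2 hxU⟩⟩⟩⟩
end

section
/- If a topological space X is I-favorable, then X has a club filter all of whose elements are closed under finite intersections. -/
open Set TopologicalSpace

variable (X : Type*) [TopologicalSpace X]

/-!
Fix a winning strategy `σ` of Player I and a choice `f U ∈ Q` inside each nonempty open `U`.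
The club filter consists of the countable `P ⊆ Q` closed under nonempty intersections and
containing `f U` for every `U` that `σ` plays after a history of finite subfamilies of `P`.
Both closure operations are finitary, so a countable family is closed off in `ω` steps and
increasing unions of closed families are closed. If `P` and an open `V` violated condition (3),
the members of `P` disjoint from `V` would be coinitial in `P`, so Player II could answer `σ`
forever inside them; as `σ` wins, their union would be dense, yet it misses `V`.
-/

section Finitary

variable {α β : Type*}

def IsFinitary (F : Set α → Set β) : Prop :=
  ∀ P, ∀ x ∈ F P, ∃ s : Finset α, ↑s ⊆ P ∧ x ∈ F s

theorem IsFinitary.subset_iUnion_of_monotone {F : Set α → Set β} (hF : IsFinitary F)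
    (hFm : Monotone F) {P : ℕ → Set α} (hP : Monotone P) : F (⋃ n, P n) ⊆ ⋃ n, F (P n) := by
  intro x hx
  obtain ⟨s, hsP, hxs⟩ := hF _ x hx
  obtain ⟨n, hn⟩ := hP.directed_le.exists_mem_subset_of_finset_subset_biUnion hsP
  exact mem_iUnion.2 ⟨n, hFm hn hxs⟩

theorem IsFinitary.apply_iUnion_iterate_subset {F : Set α → Set α} (hF : IsFinitary F)
    (hFm : Monotone F) (hle : ∀ P, P ⊆ F P) (A : Set α) :
    F (⋃ n, F^[n] A) ⊆ ⋃ n, F^[n] A := by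
  refine (hF.subset_iUnion_of_monotone hFm (hFm.monotone_iterate_of_le_map (hle A))).trans ?_
  refine iUnion_subset fun n => ?_
  rw [← Function.iterate_succ_apply' F n A]
  exact subset_iUnion (fun n => F^[n] A) (n + 1)

end Finitary

section Histories

variable {α β : Type*}

/-- The histories of plays in which Player II only ever plays members of `P`. -/
def histories (P : Set α) : Set (List (Set α)) :=
  {L | ∀ B ∈ L, B.Finite ∧ B ⊆ P}

theorem countable_setOf_forall_mem_list {S : Set β} (hS : S.Countable) :
    {L : List β | ∀ x ∈ L, x ∈ S}.Countable := by
  have := hS.to_subtype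
  refine Countable.mono (fun L hL => ?_) (countable_range (List.map (Subtype.val : S → β)))
  exact ⟨L.pmap Subtype.mk hL, by simp [List.map_pmap]⟩

theorem Set.Countable.histories {P : Set α} (hP : P.Countable) : (histories P).Countable :=
  countable_setOf_forall_mem_list (countable_ofPred_finite_subset hP)

theorem histories_mono : Monotone (histories (α := α)) :=
  fun _ _ h _ hL B hB => ⟨(hL B hB).1, (hL B hB).2.trans h⟩

theorem exists_finset_mem_histories {P : Set α} {L : List (Set α)} (hL : L ∈ histories P) :
    ∃ s : Finset α, ↑s ⊆ P ∧ L ∈ histories (s : Set α) := by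
  have hfin : (⋃ B ∈ L, B).Finite :=
    (List.finite_toSet L).biUnion fun B hB => (hL B hB).1
  refine ⟨hfin.toFinset, ?_, fun B hB => ⟨(hL B hB).1, ?_⟩⟩
  · rw [hfin.coe_toFinset]
    exact iUnion₂_subset fun B hB => (hL B hB).2
  · rw [hfin.coe_toFinset]
    exact fun x hx => mem_iUnion₂.2 ⟨B, hB, hx⟩

end Histories

section ClosureStep

variable {α : Type*} (Q : Set (Set α)) (R : List (Set (Set α)) → Set (Set α))

def closureStep (P : Set (Set α)) : Set (Set α) :=
  P ∪ (image2 (· ∩ ·) P P ∩ Q) ∪ ⋃ L ∈ histories P, R L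

theorem subset_closureStep (P : Set (Set α)) : P ⊆ closureStep Q R P :=
  subset_union_left.trans subset_union_left

theorem monotone_closureStep : Monotone (closureStep Q R) := fun _ _ h =>
  union_subset_union (union_subset_union h (inter_subset_inter_left _ (image2_subset h h)))
    (biUnion_subset_biUnion_left (histories_mono h))

theorem isFinitary_closureStep : IsFinitary (closureStep Q R) := by
  classical
  rintro P U ((hU | ⟨⟨V, hV, W, hW, rfl⟩, hVW⟩) | hU)
  · exact ⟨{U}, by simpa using hU, subset_closureStep Q R _ (by simp)⟩
  · refine ⟨{V, W}, by simp [insert_subset_iff, hV, hW], Or.inl (Or.inr ⟨?_, hVW⟩)⟩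
    exact mem_image2_of_mem (by simp) (by simp)
  · obtain ⟨L, hL, hUL⟩ := mem_iUnion₂.1 hU
    obtain ⟨s, hsP, hLs⟩ := exists_finset_mem_histories hL
    exact ⟨s, hsP, Or.inr (mem_iUnion₂.2 ⟨L, hLs, hUL⟩)⟩

variable {Q R}

theorem countable_closureStep (hR : ∀ L, (R L).Countable) {P : Set (Set α)} (hP : P.Countable) :
    (closureStep Q R P).Countable :=
  (hP.union ((hP.image2 hP _).mono inter_subset_left)).union
    (hP.histories.biUnion fun L _ => hR L)

theorem closureStep_subset (hR : ∀ L, R L ⊆ Q) {P : Set (Set α)} (hP : P ⊆ Q) :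
    closureStep Q R P ⊆ Q :=
  union_subset (union_subset hP inter_subset_right) (iUnion₂_subset fun L _ => hR L)

variable (Q R) in
def closedFamilies : Set (Set (Set α)) :=
  {P | P.Countable ∧ P ⊆ Q ∧ closureStep Q R P ⊆ P}

theorem iUnion_mem_closedFamilies {P : ℕ → Set (Set α)} (hP : ∀ n, P n ∈ closedFamilies Q R)
    (hmono : Monotone P) : ⋃ n, P n ∈ closedFamilies Q R :=
  ⟨countable_iUnion fun n => (hP n).1, iUnion_subset fun n => (hP n).2.1,
    ((isFinitary_closureStep Q R).subset_iUnion_of_monotone (monotone_closureStep Q R) hmono).trans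
      (iUnion_mono fun n => (hP n).2.2)⟩

theorem exists_mem_closedFamilies_superset (hRc : ∀ L, (R L).Countable) (hRQ : ∀ L, R L ⊆ Q)
    {A : Set (Set α)} (hA : A.Countable) (hAQ : A ⊆ Q) : ∃ P ∈ closedFamilies Q R, A ⊆ P := by
  set F := closureStep Q R
  have hiter (n : ℕ) : (F^[n] A).Countable ∧ F^[n] A ⊆ Q :=
    Function.Iterate.rec (fun P => P.Countable ∧ P ⊆ Q) ⟨hA, hAQ⟩
      (fun _ hP => ⟨countable_closureStep hRc hP.1, closureStep_subset hRQ hP.2⟩) n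
  refine ⟨⋃ n, F^[n] A, ⟨countable_iUnion fun n => (hiter n).1, iUnion_subset fun n => (hiter n).2,
    ?_⟩, subset_iUnion (fun n => F^[n] A) 0⟩
  exact (isFinitary_closureStep Q R).apply_iUnion_iterate_subset (monotone_closureStep Q R)
    (subset_closureStep Q R) A

theorem inter_mem_of_mem_closedFamilies (hQ : ∀ U ∈ Q, ∀ V ∈ Q, (U ∩ V).Nonempty → U ∩ V ∈ Q)
    {P : Set (Set α)} (hP : P ∈ closedFamilies Q R) {U V : Set α} (hU : U ∈ P) (hV : V ∈ P)
    (hne : (U ∩ V).Nonempty) : U ∩ V ∈ P :=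
  hP.2.2 (Or.inl (Or.inr ⟨mem_image2_of_mem hU hV, hQ U (hP.2.1 hU) V (hP.2.1 hV) hne⟩))

theorem subset_of_mem_closedFamilies {P : Set (Set α)} (hP : P ∈ closedFamilies Q R)
    {L : List (Set (Set α))} (hL : L ∈ histories P) : R L ⊆ P :=
  (subset_biUnion_of_mem (u := R) hL).trans (subset_union_right.trans hP.2.2)

end ClosureStep

theorem exists_seq_eq_apply_prefix {β : Type*} (τ : List β → β) :
    ∃ B : ℕ → β, ∀ n, B n = τ ((List.range n).map B) := by
  let hist : ℕ → List β := fun n => Nat.rec [] (fun _ h => h ++ [τ h]) n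
  refine ⟨fun n => τ (hist n), fun n => congrArg τ ?_⟩
  induction n with
  | zero => rfl
  | succ n ih => rw [List.range_succ, List.map_append, ← ih]; rfl

section Game

variable {X}
variable {σ : List (Set (Set X)) → Set (Set X)} {P : Set (Set X)}

theorem dense_sUnion_of_refines (hσ : ∀ L, (σ L).Finite)
    (hwin : ∀ B : ℕ → Set (Set X), (∀ n, IIMove X (σ ((List.range n).map B)) (B n)) →
      Dense (⋃ n, ⋃₀ B n))
    (hPo : ∀ U ∈ P, IsOpen U ∧ U.Nonempty) (hP : ∀ L ∈ histories P, ∀ U ∈ σ L, ∃ W ∈ P, W ⊆ U) :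
    Dense (⋃₀ P) := by
  choose! r hrP hrU using hP
  obtain ⟨B, hB⟩ := exists_seq_eq_apply_prefix fun L => r L '' σ L
  have hBP {n : ℕ} (hn : (List.range n).map B ∈ histories P) : (B n).Finite ∧ B n ⊆ P := by
    rw [hB n]
    exact ⟨(hσ _).image _, image_subset_iff.2 fun U hU => hrP _ hn U hU⟩
  have hhist (n : ℕ) : (List.range n).map B ∈ histories P := by
    induction n with
    | zero => simp [histories]
    | succ n ih =>
      rw [List.range_succ, List.map_append]
      intro C hC
      rcases List.mem_append.1 hC with hC | hC
      · exact ih C hC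
      · exact List.mem_singleton.1 hC ▸ hBP ih
  have hplay (n : ℕ) : IIMove X (σ ((List.range n).map B)) (B n) := by
    rw [hB n]
    refine ⟨⟨(hσ _).image _, ?_⟩, fun U hU => ⟨_, mem_image_of_mem _ hU, hrU _ (hhist n) U hU⟩⟩
    rintro _ ⟨U, hU, rfl⟩
    exact hPo _ (hrP _ (hhist n) U hU)
  exact (hwin B hplay).mono (iUnion_subset fun n => sUnion_mono (hBP (hhist n)).2)

theorem exists_forall_inter_nonempty_of_refines (hσ : ∀ L, (σ L).Finite)
    (hwin : ∀ B : ℕ → Set (Set X), (∀ n, IIMove X (σ ((List.range n).map B)) (B n)) →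
      Dense (⋃ n, ⋃₀ B n))
    (hPo : ∀ U ∈ P, IsOpen U ∧ U.Nonempty) (hP : ∀ L ∈ histories P, ∀ U ∈ σ L, ∃ W ∈ P, W ⊆ U)
    {V : Set X} (hV : IsOpen V) (hVne : V.Nonempty) :
    ∃ W ∈ P, ∀ U ∈ P, U ⊆ W → (U ∩ V).Nonempty := by
  by_contra! h
  have hdense : Dense (⋃₀ {U ∈ P | Disjoint U V}) := by
    refine dense_sUnion_of_refines hσ hwin (fun U hU => hPo U hU.1) fun L hL U hU => ?_
    obtain ⟨W, hW, hWU⟩ := hP L (histories_mono (sep_subset _ _) hL) U hU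
    obtain ⟨W', hW', hW'W, hW'V⟩ := h W hW
    exact ⟨W', ⟨hW', disjoint_iff_inter_eq_empty.2 hW'V⟩, hW'W.trans hWU⟩
  obtain ⟨x, hxV, U, hU, hxU⟩ := hdense.inter_open_nonempty V hV hVne
  exact disjoint_left.1 hU.2 hxU hxV

end Game

/-- If a topological space is I-favorable, then (with respect to any π-base
closed under finite intersections) it has a club filter all of whose elements
are closed under finite intersections. -/
theorem clubFilter_of_iFavorable (X : Type*) [TopologicalSpace X]
    (hX : IFavorable X) (Q : Set (Set X)) (hQ : IsPiBase X Q)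
    (hQinter : ∀ U ∈ Q, ∀ V ∈ Q, (U ∩ V).Nonempty → U ∩ V ∈ Q) :
    ∃ C : Set (Set (Set X)), IsClubFilter X Q C ∧
      ∀ P ∈ C, ∀ U ∈ P, ∀ V ∈ P, (U ∩ V).Nonempty → U ∩ V ∈ P := by
  obtain ⟨σ, hσ, hwin⟩ := hX
  choose! f hfQ hfU using hQ.2
  set R : List (Set (Set X)) → Set (Set X) := fun L => f '' σ L
  have hRc (L) : (R L).Countable := ((hσ L).1.image f).countable
  have hRQ (L) : R L ⊆ Q :=
    image_subset_iff.2 fun U hU => hfQ U ((hσ L).2 U hU).1 ((hσ L).2 U hU).2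
  have hrefines {P} (hP : P ∈ closedFamilies Q R) :
      ∀ L ∈ histories P, ∀ U ∈ σ L, ∃ W ∈ P, W ⊆ U := fun L hL U hU =>
    ⟨f U, subset_of_mem_closedFamilies hP hL (mem_image_of_mem f hU),
      hfU U ((hσ L).2 U hU).1 ((hσ L).2 U hU).2⟩
  refine ⟨closedFamilies Q R, ⟨fun P hP => ⟨hP.1, hP.2.1⟩, fun _ => iUnion_mem_closedFamilies,
    fun _ => exists_mem_closedFamilies_superset hRc hRQ, fun V hV hVne P hP => ?_⟩,
    fun P hP U hU V hV => inter_mem_of_mem_closedFamilies hQinter hP hU hV⟩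
  exact exists_forall_inter_nonempty_of_refines (fun L => (hσ L).1)
    (fun B hB => by simpa using hwin B hB 0) (fun U hU => hQ.1 U (hP.2.1 hU)) (hrefines hP) hV hVne
end

section
/- A topological space is I-favorable if and only if it has a club filter. -/
open Set TopologicalSpace

variable (X : Type*) [TopologicalSpace X]

/-! Given a winning strategy `σ` of Player I, the countable families of nonempty open sets that
are closed under `σ` form a club filter: such closures of countable families are countable, and
if condition (3) failed for such a family `P` and an open set `V`, Player II could answer inside
`P` and away from `V` for ever.

Conversely, Player I builds along the play an increasing chain of members of the club filter,
each containing a π-base set below every answer of Player II, and plays every member of every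
family of the chain infinitely often. Condition (3) for the union of the chain then makes every
tail union of Player II's answers dense. -/

section Closure

variable {α : Type*} (σ : List (Set α) → Set α)

def IsStrategyClosed (P : Set α) : Prop :=
  ∀ l : List (Set α), (∀ b ∈ l, b.Finite ∧ b ⊆ P) → σ l ⊆ P

theorem Monotone.exists_subset_of_finite_subset_iUnion {P : ℕ → Set α} (hP : Monotone P)
    {s : Set α} (hs : s.Finite) (h : s ⊆ ⋃ n, P n) : ∃ n, s ⊆ P n := by
  simpa using hP.directed_le.exists_mem_subset_of_finset_subset_biUnion (s := hs.toFinset)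
    (by simpa using h)

theorem Monotone.exists_forall_subset_of_list {P : ℕ → Set α} (hP : Monotone P)
    (l : List (Set α)) (hl : ∀ b ∈ l, b.Finite ∧ b ⊆ ⋃ n, P n) : ∃ n, ∀ b ∈ l, b ⊆ P n := by
  have hfin : (⋃ b ∈ {b | b ∈ l}, b).Finite := l.finite_toSet.biUnion fun b hb => (hl b hb).1
  obtain ⟨n, hn⟩ := hP.exists_subset_of_finite_subset_iUnion hfin
    (iUnion₂_subset fun b hb => (hl b hb).2)
  exact ⟨n, fun b hb => (subset_biUnion_of_mem (u := id) hb).trans hn⟩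

theorem isStrategyClosed_iUnion {P : ℕ → Set α} (hP : Monotone P)
    (h : ∀ n, IsStrategyClosed σ (P n)) : IsStrategyClosed σ (⋃ n, P n) := by
  intro l hl
  obtain ⟨n, hn⟩ := hP.exists_forall_subset_of_list l hl
  exact (h n l fun b hb => ⟨(hl b hb).1, hn b hb⟩).trans (subset_iUnion P n)

def strategyClosureStep (s : Set α) : Set α :=
  s ∪ ⋃ l : List {b : Set α // b.Finite ∧ b ⊆ s}, σ (l.map Subtype.val)

def strategyClosure (A : Set α) : Set α :=
  ⋃ n, (strategyClosureStep σ)^[n] A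

variable {σ}

theorem monotone_iterate_strategyClosureStep (A : Set α) :
    Monotone fun n => (strategyClosureStep σ)^[n] A :=
  monotone_nat_of_le_succ fun n => by
    rw [Function.iterate_succ_apply']
    exact subset_union_left

theorem subset_strategyClosure (A : Set α) : A ⊆ strategyClosure σ A :=
  subset_iUnion (fun n => (strategyClosureStep σ)^[n] A) 0

theorem isStrategyClosed_strategyClosure (A : Set α) :
    IsStrategyClosed σ (strategyClosure σ A) := by
  intro l hl
  obtain ⟨n, hn⟩ := (monotone_iterate_strategyClosureStep A).exists_forall_subset_of_list l hl
  lift l to List {b : Set α // b.Finite ∧ b ⊆ (strategyClosureStep σ)^[n] A}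
    using fun b hb => ⟨(hl b hb).1, hn b hb⟩
  refine Subset.trans ?_ (subset_iUnion _ (n + 1))
  rw [Function.iterate_succ_apply']
  exact (subset_iUnion (fun l => σ (List.map Subtype.val l)) l).trans subset_union_right

theorem Set.Countable.strategyClosure (hσ : ∀ l, (σ l).Countable) {A : Set α}
    (hA : A.Countable) : (strategyClosure σ A).Countable := by
  refine countable_iUnion fun n => ?_
  induction n with
  | zero => exact hA
  | succ n ih =>
    rw [Function.iterate_succ_apply']
    have : Countable {b : Set α // b.Finite ∧ b ⊆ (strategyClosureStep σ)^[n] A} :=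
      (countable_ofPred_finite_subset ih).to_subtype
    exact ih.union (countable_iUnion fun l => hσ _)

theorem strategyClosure_subset {A S : Set α} (hA : A ⊆ S) (hσ : ∀ l, σ l ⊆ S) :
    strategyClosure σ A ⊆ S := by
  refine iUnion_subset fun n => ?_
  induction n with
  | zero => exact hA
  | succ n ih =>
    rw [Function.iterate_succ_apply']
    exact union_subset ih (iUnion_subset fun l => hσ _)

end Closure

section Play

variable {β γ : Type*} (σ : List β → γ) (r : γ → β)

def answerHistory : ℕ → List β
  | 0 => []
  | n + 1 => answerHistory n ++ [r (σ (answerHistory n))]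

theorem map_range_answerHistory (n : ℕ) :
    (List.range n).map (fun k => r (σ (answerHistory σ r k))) = answerHistory σ r n := by
  induction n with
  | zero => rfl
  | succ n ih => rw [List.range_succ, List.map_append, ih]; rfl

variable {σ r}

theorem forall_mem_answerHistory {S : Set β} (hS : ∀ h : List β, (∀ b ∈ h, b ∈ S) → r (σ h) ∈ S)
    (n : ℕ) : ∀ b ∈ answerHistory σ r n, b ∈ S := by
  induction n with
  | zero => simp [answerHistory]
  | succ n ih =>
    simp only [answerHistory, List.mem_append, List.mem_singleton]
    rintro b (hb | rfl)
    exacts [ih b hb, hS _ ih]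

end Play

section Forward

variable {X}

def IsWinningStrategy (σ : List (Set (Set X)) → Set (Set X)) : Prop :=
  (∀ hist, IMove X (σ hist)) ∧
    ∀ B : ℕ → Set (Set X),
      (∀ n, IIMove X (σ ((List.range n).map B)) (B n)) →
      ∀ k, Dense (⋃ (n : ℕ) (_ : k ≤ n), ⋃₀ B n)

/-- Otherwise Player II shrinks every `W ∈ P` to some `u W ∈ P` missing `V`; answering each
move of `σ` by its image under `u` keeps the play inside `P` and never meets `V`. -/
theorem IsWinningStrategy.exists_forall_inter_nonempty {σ : List (Set (Set X)) → Set (Set X)}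
    (hσ : IsWinningStrategy σ) {P : Set (Set X)} (hPopen : ∀ U ∈ P, IsOpen U ∧ U.Nonempty)
    (hP : IsStrategyClosed σ P) {V : Set X} (hV : IsOpen V) (hVne : V.Nonempty) :
    ∃ W ∈ P, ∀ U ∈ P, U ⊆ W → (U ∩ V).Nonempty := by
  by_contra! h
  choose! u huP huW huV using h
  have hσP : ∀ n, σ (answerHistory σ (image u) n) ⊆ P := fun n =>
    hP _ <| forall_mem_answerHistory (S := {b : Set (Set X) | b.Finite ∧ b ⊆ P})
      (fun h hh => ⟨(hσ.1 h).1.image u, image_subset_iff.2 fun W hW => huP W (hP h hh hW)⟩) n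
  set B : ℕ → Set (Set X) := fun n => u '' σ (answerHistory σ (image u) n)
  have hB : ∀ n, IIMove X (σ ((List.range n).map B)) (B n) := by
    intro n
    rw [map_range_answerHistory σ (image u)]
    refine ⟨⟨(hσ.1 _).1.image u, ?_⟩, fun W hW => ⟨u W, mem_image_of_mem u hW, huW W (hσP n hW)⟩⟩
    rintro _ ⟨W, hW, rfl⟩
    exact hPopen _ (huP W (hσP n hW))
  obtain ⟨x, hxV, hx⟩ := (hσ.2 B hB 0).inter_open_nonempty V hV hVne
  simp only [mem_iUnion, mem_sUnion] at hx
  obtain ⟨n, -, _, ⟨W, hW, rfl⟩, hxW⟩ := hx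
  exact (huV W (hσP n hW)).subset ⟨hxW, hxV⟩

variable (X) in
theorem isPiBase_setOf_isOpen_nonempty : IsPiBase X {U | IsOpen U ∧ U.Nonempty} :=
  ⟨fun _ hU => hU, fun V hV hVne => ⟨V, ⟨hV, hVne⟩, subset_rfl⟩⟩

theorem IFavorable.exists_isClubFilter (h : IFavorable X) :
    ∃ Q : Set (Set X), IsPiBase X Q ∧ ∃ C : Set (Set (Set X)), IsClubFilter X Q C := by
  obtain ⟨σ, hσ⟩ : ∃ σ, IsWinningStrategy σ := h
  set Q : Set (Set X) := {U | IsOpen U ∧ U.Nonempty}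
  refine ⟨Q, isPiBase_setOf_isOpen_nonempty X,
    {P | P.Countable ∧ P ⊆ Q ∧ IsStrategyClosed σ P}, fun P hP => ⟨hP.1, hP.2.1⟩, ?_, ?_,
    fun V hV hVne P hP => hσ.exists_forall_inter_nonempty hP.2.1 hP.2.2 hV hVne⟩
  · exact fun P hP hmono => ⟨countable_iUnion fun n => (hP n).1, iUnion_subset fun n => (hP n).2.1,
      isStrategyClosed_iUnion σ hmono fun n => (hP n).2.2⟩
  · exact fun A hA hAQ => ⟨strategyClosure σ A,
      ⟨hA.strategyClosure fun l => (hσ.1 l).1.countable,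
        strategyClosure_subset hAQ fun l U hU => (hσ.1 l).2 U hU,
        isStrategyClosed_strategyClosure A⟩,
      subset_strategyClosure A⟩

end Forward

section Bookkeeping

variable {α β : Type*} {state : List β → Set α} {code : List β → α → ℕ}

variable (state code) in
def bookkeepingMove (l : List β) : Set α :=
  ⋃ j ∈ Iic l.length, {U ∈ state (l.take j) | code (l.take j) U ≤ l.length}

theorem finite_bookkeepingMove (hcode : ∀ l, InjOn (code l) (state l)) (l : List β) :
    (bookkeepingMove state code l).Finite :=
  (finite_Iic _).biUnion fun _ _ =>
    Finite.of_finite_image ((finite_Iic l.length).subset (image_subset_iff.2 fun _ hU => hU.2))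
      ((hcode _).mono fun _ hU => hU.1)

theorem exists_mem_bookkeepingMove (B : ℕ → β) {j : ℕ} {W : α}
    (hW : W ∈ state ((List.range j).map B)) (k : ℕ) :
    ∃ n ≥ k, W ∈ bookkeepingMove state code ((List.range n).map B) := by
  set n := max (max j (code ((List.range j).map B) W)) k
  have hjn : j ≤ n := le_trans (le_max_left _ _) (le_max_left _ _)
  have htake : ((List.range n).map B).take j = (List.range j).map B := by
    rw [← List.map_take, List.take_range, min_eq_left hjn]
  refine ⟨n, le_max_right _ _, mem_iUnion₂.2 ⟨j, by simpa using hjn, ?_⟩⟩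
  rw [htake]
  exact ⟨hW, by simp only [List.length_map, List.length_range]; omega⟩

end Bookkeeping

section Backward

variable {X}

theorem dense_iUnion_sUnion_of_forall_exists {P : Set (Set X)}
    (hP : ∀ V : Set X, IsOpen V → V.Nonempty → ∃ W ∈ P, ∀ U ∈ P, U ⊆ W → (U ∩ V).Nonempty)
    {A B : ℕ → Set (Set X)} (hA : ∀ W ∈ P, ∀ k, ∃ n ≥ k, W ∈ A n)
    (hAB : ∀ n, ∀ U ∈ A n, ∃ V ∈ B n, V ⊆ U) (hBP : ∀ n, ∀ V ∈ B n, ∃ U ∈ P, U ⊆ V) (k : ℕ) :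
    Dense (⋃ (n : ℕ) (_ : k ≤ n), ⋃₀ B n) := by
  refine dense_iff_inter_open.2 fun V hV hVne => ?_
  obtain ⟨W, hWP, hW⟩ := hP V hV hVne
  obtain ⟨n, hkn, hWn⟩ := hA W hWP k
  obtain ⟨V', hV'B, hV'W⟩ := hAB n W hWn
  obtain ⟨U, hUP, hUV'⟩ := hBP n V' hV'B
  obtain ⟨x, hxU, hxV⟩ := hW U hUP (hUV'.trans hV'W)
  exact ⟨x, hxV, mem_iUnion₂.2 ⟨n, hkn, V', hV'B, hUV' hxU⟩⟩

variable {Q : Set (Set X)} {C : Set (Set (Set X))}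

theorem IsClubFilter.exists_mem_of_countable_subset (hC : IsClubFilter X Q C)
    (A : Set (Set X)) : ∃ P ∈ C, A.Countable → A ⊆ Q → A ⊆ P := by
  by_cases hA : A.Countable ∧ A ⊆ Q
  · obtain ⟨P, hP, hAP⟩ := hC.2.2.1 A hA.1 hA.2
    exact ⟨P, hP, fun _ _ => hAP⟩
  · obtain ⟨P, hP, -⟩ := hC.2.2.1 ∅ countable_empty (empty_subset Q)
    exact ⟨P, hP, fun hc hs => absurd ⟨hc, hs⟩ hA⟩

theorem IsClubFilter.exists_absorbing (hQ : IsPiBase X Q) (hC : IsClubFilter X Q C) :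
    ∃ state : List (Set (Set X)) → Set (Set X), (∀ l, state l ∈ C) ∧
      ∀ l b, IMove X b → state l ⊆ state (l ++ [b]) ∧ ∀ V ∈ b, ∃ U ∈ state (l ++ [b]), U ⊆ V := by
  set q : Set X → Set X := fun V => Classical.epsilon fun W => W ∈ Q ∧ W ⊆ V
  have hq : ∀ V, IsOpen V → V.Nonempty → q V ∈ Q ∧ q V ⊆ V := fun V hV hVne =>
    Classical.epsilon_spec (hQ.2 V hV hVne)
  choose ext hextC hext using hC.exists_mem_of_countable_subset
  set next : Set (Set X) → Set (Set X) → Set (Set X) := fun P b => ext (P ∪ q '' b)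
  have hfoldC : ∀ (l : List (Set (Set X))) P, P ∈ C → l.foldl next P ∈ C := by
    intro l
    induction l with
    | nil => exact fun P hP => hP
    | cons b l ih => exact fun P _ => ih _ (hextC _)
  refine ⟨fun l : List (Set (Set X)) => l.foldl next (ext ∅), fun l => hfoldC l _ (hextC ∅), fun l b hb => ?_⟩
  set P := l.foldl next (ext ∅)
  have hPC : P ∈ C := hfoldC l _ (hextC ∅)
  have hqb : q '' b ⊆ Q := by
    rintro _ ⟨V, hV, rfl⟩
    exact (hq V ((hb.2 V hV).1) (hb.2 V hV).2).1
  have hgrow : P ∪ q '' b ⊆ (l ++ [b]).foldl next (ext ∅) := by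
    rw [List.foldl_append, List.foldl_cons, List.foldl_nil]
    exact hext _ ((hC.1 P hPC).1.union (hb.1.image q).countable) (union_subset (hC.1 P hPC).2 hqb)
  refine ⟨subset_union_left.trans hgrow, fun V hV => ⟨q V, hgrow (Or.inr ⟨V, hV, rfl⟩), ?_⟩⟩
  exact (hq V (hb.2 V hV).1 (hb.2 V hV).2).2

theorem IsClubFilter.iFavorable (hQ : IsPiBase X Q) (hC : IsClubFilter X Q C) : IFavorable X := by
  obtain ⟨state, hstateC, hstate⟩ := hC.exists_absorbing hQ
  choose code hcode using fun l => countable_iff_exists_injOn.1 (hC.1 _ (hstateC l)).1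
  refine ⟨bookkeepingMove state code, fun l => ⟨finite_bookkeepingMove hcode l, fun U hU => ?_⟩,
    fun B hB k => ?_⟩
  · obtain ⟨j, -, hUj, -⟩ := mem_iUnion₂.1 hU
    exact hQ.1 U ((hC.1 _ (hstateC _)).2 hUj)
  set P : ℕ → Set (Set X) := fun n => state ((List.range n).map B)
  have hsucc : ∀ n, (List.range (n + 1)).map B = (List.range n).map B ++ [B n] := fun n => by
    rw [List.range_succ, List.map_append, List.map_singleton]
  have hmono : Monotone P := monotone_nat_of_le_succ fun n => by
    simpa only [P, hsucc] using (hstate _ _ (hB n).1).1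
  refine dense_iUnion_sUnion_of_forall_exists
    (fun V hV hVne => hC.2.2.2 V hV hVne _ (hC.2.1 P (fun n => hstateC _) hmono))
    (fun W hW k => ?_) (fun n => (hB n).2) (fun n V hV => ?_) k
  · obtain ⟨j, hj⟩ := mem_iUnion.1 hW
    exact exists_mem_bookkeepingMove B hj k
  · obtain ⟨U, hU, hUV⟩ := (hstate _ _ (hB n).1).2 V hV
    exact ⟨U, mem_iUnion.2 ⟨n + 1, by simpa only [P, hsucc] using hU⟩, hUV⟩

end Backward

/-- A topological space is I-favorable if and only if it has a club filter
(with respect to some π-base). -/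
theorem iFavorable_iff_clubFilter (X : Type*) [TopologicalSpace X] :
    IFavorable X ↔
      ∃ Q : Set (Set X), IsPiBase X Q ∧
        ∃ C : Set (Set (Set X)), IsClubFilter X Q C :=
  ⟨IFavorable.exists_isClubFilter, fun ⟨_, hQ, _, hC⟩ => hC.iFavorable hQ⟩
end

section
/- Suppose X and Y are topological spaces and Y is I-favorable. If E ⊆ X × Y is open and dense in the product topology, then there exists a meager set P ⊆ X such that the section E_x = {y ∈ Y : (x,y) ∈ E} is dense in Y for all x ∈ X \ P. -/
open Set TopologicalSpace

variable (X : Type*) [TopologicalSpace X]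

/-!
Fix a winning strategy `σ` of Player I in `Y`. By Zorn's lemma, build layers of pairwise
disjoint open sets of `X` with dense union, each set `W` labelled by a partial play against `σ`:
a set of layer `n + 1` lies in a set of layer `n`, its play extends the parent's by one legal
answer `B` of Player II, and `W ×ˢ V ⊆ E` for every `V ∈ B`. A point `x` of the residual
intersection of the layers picks out one branch, that is, a full play against `σ` all of whose
answers lie in the section `E_x`; since `σ` wins, `E_x` is dense.
-/

section

variable {ι X Y : Type*} [TopologicalSpace X] [TopologicalSpace Y]

theorem exists_pairwiseDisjoint_dense {S : Set ι} {f : ι → Set X}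
    (hne : ∀ i ∈ S, (f i).Nonempty) (hS : ∀ U, IsOpen U → U.Nonempty → ∃ i ∈ S, f i ⊆ U) :
    ∃ M ⊆ S, M.PairwiseDisjoint f ∧ Dense (⋃ i ∈ M, f i) := by
  obtain ⟨M, ⟨hMS, hMd⟩, hmax⟩ := zorn_subset {M | M ⊆ S ∧ M.PairwiseDisjoint f}
    fun c hc hchain => ⟨⋃₀ c, ⟨sUnion_subset fun M hM => (hc hM).1,
      (hchain.pairwiseDisjoint_sUnion f).2 fun M hM => (hc hM).2⟩,
      fun _ => subset_sUnion_of_mem⟩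
  refine ⟨M, hMS, hMd, dense_iff_inter_open.2 fun U hUo hUne => ?_⟩
  by_contra hUM
  obtain ⟨i, hiS, hiU⟩ := hS U hUo hUne
  have hdisj : ∀ j ∈ M, Disjoint (f i) (f j) := fun j hj =>
    disjoint_left.2 fun x hxi hxj => hUM ⟨x, hiU hxi, mem_biUnion hj hxj⟩
  have hiM : i ∈ M := hmax ⟨insert_subset hiS hMS, hMd.insert fun j hj _ => hdisj j hj⟩
    (subset_insert i M) (mem_insert i M)
  obtain ⟨x, hx⟩ := hne i hiS
  exact disjoint_left.1 (hdisj i hiM) hx hx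

theorem exists_prod_subset_of_isOpen_of_dense {E : Set (X × Y)} (hEo : IsOpen E) (hEd : Dense E)
    {W : Set X} {U : Set Y} (hWo : IsOpen W) (hWne : W.Nonempty) (hUo : IsOpen U)
    (hUne : U.Nonempty) :
    ∃ W' V, IsOpen W' ∧ W'.Nonempty ∧ W' ⊆ W ∧ IsOpen V ∧ V.Nonempty ∧ V ⊆ U ∧ W' ×ˢ V ⊆ E := by
  obtain ⟨z, ⟨hzW, hzU⟩, hzE⟩ := hEd.inter_open_nonempty _ (hWo.prod hUo) (hWne.prod hUne)
  obtain ⟨u, v, huo, hvo, hzu, hzv, huv⟩ := isOpen_prod_iff.1 hEo z.1 z.2 hzE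
  exact ⟨u ∩ W, v ∩ U, huo.inter hWo, ⟨z.1, hzu, hzW⟩, inter_subset_right, hvo.inter hUo,
    ⟨z.2, hzv, hzU⟩, inter_subset_right, (prod_mono inter_subset_left inter_subset_left).trans huv⟩

theorem exists_iiMove_prod_subset {E : Set (X × Y)} (hEo : IsOpen E) (hEd : Dense E)
    {A : Set (Set Y)} (hA : IMove Y A) {W : Set X} (hWo : IsOpen W) (hWne : W.Nonempty) :
    ∃ W' B, IsOpen W' ∧ W'.Nonempty ∧ W' ⊆ W ∧ IIMove Y A B ∧ ∀ V ∈ B, W' ×ˢ V ⊆ E := by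
  obtain ⟨hAfin, hAo⟩ := hA
  induction A, hAfin using Set.Finite.induction_on generalizing W with
  | empty =>
    exact ⟨W, ∅, hWo, hWne, subset_rfl, ⟨⟨finite_empty, by simp⟩, by simp⟩, by simp⟩
  | @insert U A _ _ ih =>
    obtain ⟨W₁, B, hW₁o, hW₁ne, hW₁W, ⟨⟨hBfin, hBo⟩, hAB⟩, hBE⟩ :=
      ih hWo hWne (fun U' hU' => hAo U' (mem_insert_of_mem U hU'))
    obtain ⟨hUo, hUne⟩ := hAo U (mem_insert U A)
    obtain ⟨W', V, hW'o, hW'ne, hW'W₁, hVo, hVne, hVU, hW'V⟩ :=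
      exists_prod_subset_of_isOpen_of_dense hEo hEd hW₁o hW₁ne hUo hUne
    refine ⟨W', insert V B, hW'o, hW'ne, hW'W₁.trans hW₁W, ⟨⟨hBfin.insert V, ?_⟩, ?_⟩, ?_⟩
    · exact forall_mem_insert.2 ⟨⟨hVo, hVne⟩, hBo⟩
    · refine forall_mem_insert.2 ⟨⟨V, mem_insert V B, hVU⟩, fun U' hU' => ?_⟩
      obtain ⟨V', hV'B, hV'U'⟩ := hAB U' hU'
      exact ⟨V', mem_insert_of_mem V hV'B, hV'U'⟩
    · exact forall_mem_insert.2 ⟨hW'V, fun V' hV' =>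
        (prod_mono_left hW'W₁).trans (hBE V' hV')⟩

def IsDisjointOpenDense (F : Set (Set X × ι)) : Prop :=
  (∀ p ∈ F, IsOpen p.1) ∧ F.PairwiseDisjoint Prod.fst ∧ Dense (⋃ p ∈ F, p.1)

/-- A pair `(W, h)` is an open set `W ⊆ X` labelled by a history `h` of Player II's moves
against `σ`. -/
def IsPlayRefinement (E : Set (X × Y)) (σ : List (Set (Set Y)) → Set (Set Y))
    (F G : Set (Set X × List (Set (Set Y)))) : Prop :=
  ∀ q ∈ G, ∃ p ∈ F, ∃ B, q.1 ⊆ p.1 ∧ IIMove Y (σ p.2) B ∧ (∀ V ∈ B, q.1 ×ˢ V ⊆ E) ∧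
    q.2 = p.2 ++ [B]

variable {E : Set (X × Y)} {σ : List (Set (Set Y)) → Set (Set Y)}

theorem exists_isPlayRefinement (hEo : IsOpen E) (hEd : Dense E) (hσ : ∀ h, IMove Y (σ h))
    {F : Set (Set X × List (Set (Set Y)))} (hF : IsDisjointOpenDense F) :
    ∃ G, IsDisjointOpenDense G ∧ IsPlayRefinement E σ F G := by
  obtain ⟨G, hGS, hGd, hGdense⟩ := exists_pairwiseDisjoint_dense
    (S := {q | IsOpen q.1 ∧ q.1.Nonempty ∧ IsPlayRefinement E σ F {q}}) (f := Prod.fst)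
    (fun q hq => hq.2.1)
    fun U hUo hUne => by
      obtain ⟨x, hxU, hxF⟩ := hF.2.2.inter_open_nonempty U hUo hUne
      obtain ⟨p, hpF, hxp⟩ := mem_iUnion₂.1 hxF
      obtain ⟨W, B, hWo, hWne, hWUp, hB, hBE⟩ := exists_iiMove_prod_subset hEo hEd (hσ p.2)
        (hUo.inter (hF.1 p hpF)) ⟨x, hxU, hxp⟩
      refine ⟨(W, p.2 ++ [B]), ⟨hWo, hWne, ?_⟩, fun _ h => (hWUp h).1⟩
      rintro _ rfl
      exact ⟨p, hpF, B, fun _ h => (hWUp h).2, hB, hBE, rfl⟩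
  exact ⟨G, ⟨fun q hq => (hGS hq).1, hGd, hGdense⟩, fun q hq => (hGS hq).2.2 q rfl⟩

theorem exists_seq_isPlayRefinement (hEo : IsOpen E) (hEd : Dense E) (hσ : ∀ h, IMove Y (σ h)) :
    ∃ F : ℕ → Set (Set X × List (Set (Set Y))), F 0 = {(univ, [])} ∧
      (∀ n, IsDisjointOpenDense (F n)) ∧ ∀ n, IsPlayRefinement E σ (F n) (F (n + 1)) := by
  have h0 : IsDisjointOpenDense {((univ : Set X), ([] : List (Set (Set Y))))} :=
    ⟨by simp, pairwiseDisjoint_singleton _ _, by simp⟩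
  choose G hG hFG using fun F : {F // IsDisjointOpenDense F} =>
    exists_isPlayRefinement hEo hEd hσ F.2
  let F : ℕ → {F // IsDisjointOpenDense F} := fun n => n.rec ⟨_, h0⟩ fun _ F => ⟨G F, hG F⟩
  exact ⟨fun n => (F n).1, rfl, fun n => (F n).2, fun n => hFG (F n)⟩

end

section

variable {X Y : Type*} [TopologicalSpace Y] {E : Set (X × Y)}
  {σ : List (Set (Set Y)) → Set (Set Y)}

/-- Disjointness makes the sets of the layers containing `x` a single branch of the refinement
tree, whose labels spell out one infinite play against `σ`. -/
theorem exists_play_of_forall_mem {F : ℕ → Set (Set X × List (Set (Set Y)))}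
    (hF0 : F 0 = {(univ, [])}) (hFd : ∀ n, (F n).PairwiseDisjoint Prod.fst)
    (hFF : ∀ n, IsPlayRefinement E σ (F n) (F (n + 1))) {x : X}
    (hx : ∀ n, x ∈ ⋃ p ∈ F n, p.1) :
    ∃ b : ℕ → Set (Set Y), (∀ n, IIMove Y (σ ((List.range n).map b)) (b n)) ∧
      ∀ n, ∀ V ∈ b n, V ⊆ {y | (x, y) ∈ E} := by
  choose p hpF hxp using fun n => mem_iUnion₂.1 (hx n)
  have hstep : ∀ n, ∃ B, IIMove Y (σ (p n).2) B ∧ (∀ V ∈ B, V ⊆ {y | (x, y) ∈ E}) ∧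
      (p (n + 1)).2 = (p n).2 ++ [B] := by
    intro n
    obtain ⟨r, hrF, B, hsub, hB, hBE, hr⟩ := hFF n _ (hpF (n + 1))
    obtain rfl : r = p n := (hFd n).elim_set hrF (hpF n) x (hsub (hxp (n + 1))) (hxp n)
    exact ⟨B, hB, fun V hV y hy => hBE V hV ⟨hxp (n + 1), hy⟩, hr⟩
  choose b hb hbE hpb using hstep
  have hhist : ∀ n, (p n).2 = (List.range n).map b := by
    intro n
    induction n with
    | zero =>
      have hp0 := hpF 0
      rw [hF0, mem_singleton_iff] at hp0
      simp [hp0]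
    | succ n ih => rw [hpb n, ih, List.range_succ, List.map_append, List.map_singleton]
  exact ⟨b, fun n => hhist n ▸ hb n, hbE⟩

end

/-- If `Y` is I-favorable and `E ⊆ X × Y` is open and dense, then there is a
meager set `P ⊆ X` such that the section `E_x` is dense in `Y` for all
`x ∈ X \ P`. -/
theorem dense_sections_of_openDense {X Y : Type*} [TopologicalSpace X]
    [TopologicalSpace Y] (hY : IFavorable Y) (E : Set (X × Y))
    (hEo : IsOpen E) (hEd : Dense E) :
    ∃ P : Set X, IsMeagre P ∧
      ∀ x ∈ (Set.univ : Set X) \ P, Dense {y : Y | (x, y) ∈ E} := by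
  obtain ⟨σ, hσ, hσwin⟩ := hY
  obtain ⟨F, hF0, hF, hFF⟩ := exists_seq_isPlayRefinement hEo hEd hσ
  refine ⟨(⋂ n, ⋃ p ∈ F n, p.1)ᶜ, ?_, fun x hx => ?_⟩
  · rw [IsMeagre, compl_compl]
    exact countable_iInter_mem.2 fun n =>
      residual_of_dense_open (isOpen_biUnion (hF n).1) (hF n).2.2
  · obtain ⟨b, hb, hbE⟩ := exists_play_of_forall_mem hF0 (fun n => (hF n).2.1) hFF
      (mem_iInter.1 (notMem_compl_iff.1 hx.2))
    exact (hσwin b hb 0).mono (iUnion₂_subset fun n _ => sUnion_subset (hbE n))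
end

section
/- Every I-favorable space is universally Kuratowski-Ulam*: if Y is I-favorable, then for every topological space X and every nowhere dense E ⊆ X × Y, the set {x ∈ X : E_x is not nowhere dense in Y} is meager in X. -/
/-!
Let `W` be the complement of the closure of `E`, a dense open subset of `X × Y`, and fix a
winning strategy `σ` of Player I. Grow a tree of nonempty open subsets of `X`, each node
remembering the history `h` of Player II's answers leading to it: the children of a node `G`
form a maximal disjoint family of open sets `G' ⊆ G`, each carrying a legal answer `B` to `σ h`
with `G' × V ⊆ W` for all `V ∈ B`. By maximality every level of the tree has dense open union,
so residually many `x` lie on an infinite branch. The answers along that branch form a play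
against `σ`, so their union is dense; it lies in the slice `W_x`, hence `E_x` is nowhere dense.
-/

open Set TopologicalSpace

variable (X : Type*) [TopologicalSpace X]

universe u

section Tree

variable {Z α : Type*}

def treeLevel (children : α → Set α) (r : α) : ℕ → Set α
  | 0 => {r}
  | n + 1 => ⋃ a ∈ treeLevel children r n, children a

variable (f : α → Set Z) {children : α → Set α} {r : α}

lemma pairwiseDisjoint_treeLevel (hsub : ∀ a, ∀ b ∈ children a, f b ⊆ f a)
    (hdisj : ∀ a, (children a).PairwiseDisjoint f) :
    ∀ n, (treeLevel children r n).PairwiseDisjoint f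
  | 0 => pairwiseDisjoint_singleton r f
  | n + 1 => PairwiseDisjoint.biUnion
      ((pairwiseDisjoint_treeLevel hsub hdisj n).mono fun a => iUnion₂_subset (hsub a))
      fun a _ => hdisj a

lemma exists_branch_of_forall_mem_treeLevel (hsub : ∀ a, ∀ b ∈ children a, f b ⊆ f a)
    (hdisj : ∀ a, (children a).PairwiseDisjoint f) {x : Z}
    (hx : ∀ n, x ∈ ⋃ a ∈ treeLevel children r n, f a) :
    ∃ a : ℕ → α, a 0 = r ∧ ∀ n, a (n + 1) ∈ children (a n) ∧ x ∈ f (a n) := by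
  simp only [mem_iUnion₂, exists_prop] at hx
  choose a ha hxa using hx
  refine ⟨a, ha 0, fun n => ⟨?_, hxa n⟩⟩
  obtain ⟨b, hb, hab⟩ := mem_iUnion₂.1 (ha (n + 1))
  obtain rfl : b = a n := (pairwiseDisjoint_treeLevel f hsub hdisj n).elim_set hb (ha n) x
    (hsub b _ hab (hxa (n + 1))) (hxa n)
  exact hab

variable [TopologicalSpace Z]

lemma isOpen_of_mem_treeLevel (hr : IsOpen (f r)) (hopen : ∀ a, ∀ b ∈ children a, IsOpen (f b)) :
    ∀ {n a}, a ∈ treeLevel children r n → IsOpen (f a)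
  | 0, _, rfl => hr
  | _ + 1, _, ha => by
    obtain ⟨b, -, hab⟩ := mem_iUnion₂.1 ha
    exact hopen b _ hab

lemma dense_biUnion_treeLevel (hr : f r = univ) (hopen : ∀ a, ∀ b ∈ children a, IsOpen (f b))
    (hdense : ∀ a, interior (f a) ⊆ closure (⋃ b ∈ children a, f b)) :
    ∀ n, Dense (⋃ a ∈ treeLevel children r n, f a)
  | 0 => by simp [treeLevel, hr]
  | n + 1 => by
    refine dense_closure.1 ((dense_biUnion_treeLevel hr hopen hdense n).mono ?_)
    refine iUnion₂_subset fun a ha => ?_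
    rw [← (isOpen_of_mem_treeLevel f (hr ▸ isOpen_univ) hopen ha).interior_eq]
    refine (hdense a).trans (closure_mono ?_)
    simp only [treeLevel, biUnion_iUnion]
    exact subset_biUnion_of_mem (u := fun a => ⋃ b ∈ children a, f b) ha

lemma eventually_residual_exists_branch (hr : f r = univ)
    (hopen : ∀ a, ∀ b ∈ children a, IsOpen (f b)) (hsub : ∀ a, ∀ b ∈ children a, f b ⊆ f a)
    (hdisj : ∀ a, (children a).PairwiseDisjoint f)
    (hdense : ∀ a, interior (f a) ⊆ closure (⋃ b ∈ children a, f b)) :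
    ∀ᶠ x in residual Z, ∃ a : ℕ → α, a 0 = r ∧ ∀ n, a (n + 1) ∈ children (a n) ∧ x ∈ f (a n) :=
  Filter.mem_of_superset
    (countable_iInter_mem.2 fun n => residual_of_dense_open
      (isOpen_biUnion fun _ => isOpen_of_mem_treeLevel f (hr ▸ isOpen_univ) hopen)
      (dense_biUnion_treeLevel f hr hopen hdense n))
    fun _ hx => exists_branch_of_forall_mem_treeLevel f hsub hdisj (mem_iInter.1 hx)

lemma exists_pairwiseDisjoint_interior_subset_closure_biUnion (P : α → Prop) (G : Set Z)
    (h : ∀ O, IsOpen O → O.Nonempty → O ⊆ G → ∃ a, P a ∧ (f a).Nonempty ∧ f a ⊆ O) :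
    ∃ s : Set α, (∀ a ∈ s, P a ∧ f a ⊆ G) ∧ s.PairwiseDisjoint f ∧
      interior G ⊆ closure (⋃ a ∈ s, f a) := by
  obtain ⟨m, ⟨hmP, hmdisj⟩, hmax⟩ : ∃ m, Maximal
      (· ∈ {s : Set α | (∀ a ∈ s, P a ∧ f a ⊆ G) ∧ s.PairwiseDisjoint f}) m := by
    refine zorn_subset _ fun c hcS hc => ⟨⋃₀ c, ⟨?_, ?_⟩, fun s => subset_sUnion_of_mem⟩
    · rintro a ⟨s, hs, ha⟩
      exact (hcS hs).1 a ha
    · exact (hc.pairwiseDisjoint_sUnion f).2 fun s hs => (hcS hs).2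
  refine ⟨m, hmP, hmdisj, sdiff_eq_empty.1 ?_⟩
  by_contra hne
  obtain ⟨a, haP, hane, haO⟩ := h _ (isOpen_interior.sdiff isClosed_closure)
    (nonempty_iff_ne_empty.2 hne) (sdiff_subset.trans interior_subset)
  have hdisj : ∀ b ∈ m, Disjoint (f a) (f b) := fun b hb =>
    disjoint_left.2 fun z hza hzb => (haO hza).2 (subset_closure (mem_biUnion hb hzb))
  have haG : f a ⊆ G := haO.trans (sdiff_subset.trans interior_subset)
  have ham : a ∈ m := hmax (y := insert a m)
    ⟨forall_mem_insert.2 ⟨⟨haP, haG⟩, hmP⟩, hmdisj.insert fun b hb _ => hdisj b hb⟩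
    (subset_insert a m) (mem_insert a m)
  obtain ⟨z, hz⟩ := hane
  exact (haO hz).2 (subset_closure (mem_biUnion ham hz))

end Tree

lemma List.eq_map_range_of_eq_append_singleton {β : Type*} {h : ℕ → List β} {B : ℕ → β}
    (h0 : h 0 = []) (hsucc : ∀ n, h (n + 1) = h n ++ [B n]) (n : ℕ) :
    h n = (List.range n).map B := by
  induction n with
  | zero => exact h0
  | succ n ih => rw [hsucc, ih, List.range_succ, List.map_append, List.map_singleton]

section Product

variable {Z Y : Type*} [TopologicalSpace Z] [TopologicalSpace Y]

lemma isNowhereDense_slice_of_dense {E : Set (Z × Y)} {x : Z} {D : Set Y} (hD : Dense D)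
    (hDE : ∀ y ∈ D, (x, y) ∉ closure E) : IsNowhereDense {y | (x, y) ∈ E} := by
  have hclosed : IsClosed {y | (x, y) ∈ closure E} :=
    isClosed_closure.preimage (Continuous.prodMk_right x)
  refine IsNowhereDense.mono (s := {y | (x, y) ∈ closure E}) (fun _ hy => subset_closure hy) ?_
  exact hclosed.isNowhereDense_iff.2 (interior_eq_empty_iff_dense_compl.2 (hD.mono hDE))

def IsBoxResponse (W : Set (Z × Y)) (F : Set (Set Y)) (G : Set Z) (B : Set (Set Y)) : Prop :=
  IsOpen G ∧ G.Nonempty ∧ IIMove Y F B ∧ ∀ V ∈ B, G ×ˢ V ⊆ W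

lemma exists_isBoxResponse_subset {W : Set (Z × Y)} (hWo : IsOpen W) (hWd : Dense W)
    {F : Set (Set Y)} (hF : IMove Y F) {O : Set Z} (hO : IsOpen O) (hne : O.Nonempty) :
    ∃ G ⊆ O, ∃ B, IsBoxResponse W F G B := by
  obtain ⟨hFfin, hFopen⟩ := hF
  induction F, hFfin using Set.Finite.induction_on with
  | empty => exact ⟨O, subset_rfl, ∅, hO, hne, ⟨⟨finite_empty, by simp⟩, by simp⟩, by simp⟩
  | @insert U F _ _ ih =>
    obtain ⟨hUo, hUne⟩ := hFopen U (mem_insert U F)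
    obtain ⟨G, hGO, B, hGo, hGne, ⟨⟨hBfin, hBopen⟩, hBF⟩, hGB⟩ :=
      ih fun V hV => hFopen V (mem_insert_of_mem U hV)
    obtain ⟨⟨a, b⟩, habW, hab⟩ :=
      hWd.inter_open_nonempty _ (hGo.prod hUo) (hGne.prod hUne)
    obtain ⟨u, v, hu, hv, hau, hbv, huv⟩ :=
      isOpen_prod_iff.1 (hWo.inter (hGo.prod hUo)) a b ⟨hab, habW⟩
    have huG : u ⊆ G := fun z hz => (huv (mk_mem_prod hz hbv)).2.1
    refine ⟨u, huG.trans hGO, insert v B, hu, ⟨a, hau⟩, ⟨⟨hBfin.insert v, ?_⟩, ?_⟩, ?_⟩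
    · exact forall_mem_insert.2 ⟨⟨hv, b, hbv⟩, hBopen⟩
    · have hvU : v ⊆ U := fun y hy => (huv (mk_mem_prod hau hy)).2.2
      refine forall_mem_insert.2 ⟨⟨v, mem_insert v B, hvU⟩, ?_⟩
      exact fun U' hU' => (hBF U' hU').imp fun V hV => ⟨mem_insert_of_mem v hV.1, hV.2⟩
    · exact forall_mem_insert.2 ⟨fun p hp => (huv hp).1,
        fun V hV => (prod_mono huG subset_rfl).trans (hGB V hV)⟩

lemma eventually_residual_exists_play {W : Set (Z × Y)} (hWo : IsOpen W) (hWd : Dense W)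
    {σ : List (Set (Set Y)) → Set (Set Y)} (hσ : ∀ h, IMove Y (σ h)) :
    ∀ᶠ x in residual Z, ∃ B : ℕ → Set (Set Y),
      (∀ n, IIMove Y (σ ((List.range n).map B)) (B n)) ∧ ∀ n, ∀ V ∈ B n, ∀ y ∈ V, (x, y) ∈ W := by
  choose S hS hSdisj hSdense using fun (G : Set Z) (h : List (Set (Set Y))) =>
    exists_pairwiseDisjoint_interior_subset_closure_biUnion Prod.fst
      (fun p => IsBoxResponse W (σ h) p.1 p.2) G fun O hO hne _ => by
        obtain ⟨G', hG'O, B, hG'B⟩ := exists_isBoxResponse_subset hWo hWd (hσ h) hO hne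
        exact ⟨(G', B), hG'B, hG'B.2.1, hG'O⟩
  let child (a : Set Z × List (Set (Set Y))) (p : Set Z × Set (Set Y)) := (p.1, a.2 ++ [p.2])
  have hbranch := eventually_residual_exists_branch Prod.fst
    (children := fun a => child a '' S a.1 a.2) (r := (univ, [])) rfl
    (fun a => by rintro _ ⟨p, hp, rfl⟩; exact (hS _ _ p hp).1.1)
    (fun a => by rintro _ ⟨p, hp, rfl⟩; exact (hS _ _ p hp).2)
    (fun a => by
      rintro _ ⟨p, hp, rfl⟩ _ ⟨q, hq, rfl⟩ hpq
      exact hSdisj a.1 a.2 hp hq (ne_of_apply_ne (child a) hpq))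
    (fun a => (hSdense a.1 a.2).trans_eq (by rw [biUnion_image]))
  refine hbranch.mono fun x ⟨a, ha0, ha⟩ => ?_
  choose p hp hpa using fun n => (ha n).1
  have hhist : ∀ n, (a n).2 = (List.range n).map fun n => (p n).2 :=
    List.eq_map_range_of_eq_append_singleton (h := fun n => (a n).2) (by rw [ha0])
      fun n => by rw [← hpa n]
  refine ⟨fun n => (p n).2, fun n => hhist n ▸ (hS _ _ _ (hp n)).1.2.2.1, fun n V hV y hy => ?_⟩
  have hxp : x ∈ (p n).1 := by simpa [← hpa n] using (ha (n + 1)).2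
  exact (hS _ _ _ (hp n)).1.2.2.2 V hV (mk_mem_prod hxp hy)

end Product

/-- Every I-favorable space is universally Kuratowski-Ulam*. -/
theorem uKUstar_of_iFavorable (Y : Type*) [TopologicalSpace Y]
    (hY : IFavorable Y) :
    ∀ (Z : Type u) [TopologicalSpace Z] (E : Set (Z × Y)), IsNowhereDense E →
      IsMeagre {x : Z | ¬ IsNowhereDense {y : Y | (x, y) ∈ E}} := by
  obtain ⟨σ, hσ, hwin⟩ := hY
  intro Z _ E hE
  have hplay := eventually_residual_exists_play isClosed_closure.isOpen_compl
    (interior_eq_empty_iff_dense_compl.1 hE) hσ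
  refine hplay.mono fun x ⟨B, hB, hBW⟩ => not_not_intro ?_
  refine isNowhereDense_slice_of_dense (hwin B hB 0) fun y hy => ?_
  obtain ⟨n, -, V, hV, hyV⟩ : ∃ n, 0 ≤ n ∧ ∃ V ∈ B n, y ∈ V := by simpa using hy
  exact hBW n V hV y hyV
end

section
/- If a compact Hausdorff space Y is I-favorable, then the hyperspace exp(Y) with the Vietoris topology is universally Kuratowski-Ulam*: for every topological space X and every nowhere dense E ⊆ X × exp(Y), the set {x ∈ X : E_x is not nowhere dense in exp(Y)} is meager. -/
open Set TopologicalSpace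

variable (X : Type*) [TopologicalSpace X]

/-- The hyperspace of nonempty closed subsets of `X`. -/
def Hyper (X : Type*) [TopologicalSpace X] : Type _ :=
  {A : Set X // IsClosed A ∧ A.Nonempty}

/-- The Vietoris basic open set `⟨V₁,…,Vₙ⟩` determined by a list of open sets:
all nonempty closed sets contained in the union and meeting each member. -/
def vietorisBasic {X : Type*} [TopologicalSpace X] (L : List (Set X)) :
    Set (Hyper X) :=
  {A | A.1 ⊆ ⋃₀ {V | V ∈ L} ∧ ∀ V ∈ L, (A.1 ∩ V).Nonempty}

/-- The Vietoris topology on the hyperspace, generated by the basic sets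
`⟨V₁,…,Vₙ⟩` for nonempty finite lists of open sets. -/
instance (X : Type*) [TopologicalSpace X] : TopologicalSpace (Hyper X) :=
  TopologicalSpace.generateFrom
    {S | ∃ L : List (Set X), L ≠ [] ∧ (∀ V ∈ L, IsOpen V) ∧ S = vietorisBasic L}

/-!
Let `D` be the complement of `closure E`, an open dense subset of `Z × exp Y`, and let `σ` be a
winning strategy of Player I on `Y`. A Zorn-type tree argument shows that residually many `x ∈ Z`
lie on an infinite branch of nonempty open sets `H₀ ⊇ H₁ ⊇ ⋯` carrying growing finite stocks of
open subsets of `Y`: each stock is closed under one more round of `σ`, and for every short list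
`τ` of members of a stock, some Vietoris basic set `⟨η⟩` refining `⟨τ⟩`, with `η` in the next
stock, satisfies `H_{n+1} × ⟨η⟩ ⊆ D`.

The union `P` of the stocks along the branch through `x` is closed under `σ`. Since `σ` wins,
every nonempty open `V ⊆ Y` is forced by some `W ∈ P`, in the sense that all members of `P` inside
`W` meet `V`: otherwise Player II could answer inside `P` while avoiding `V`. Replacing the members
of a basic set `⟨G⟩` by members of `P` forcing them and refining once more yields a finite subset
of `Y` lying in `⟨G⟩` and in the slice `D_x`. Hence `D_x` is dense and `E_x` is nowhere dense.
-/

open Filter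

theorem Set.exists_pairwiseDisjoint_forall_inter_nonempty {α β : Type*} (f : α → Set β)
    (C : Set α) :
    ∃ F ⊆ C, F.PairwiseDisjoint f ∧ ∀ c ∈ C, (f c).Nonempty → ∃ d ∈ F, (f c ∩ f d).Nonempty := by
  obtain ⟨F, hF⟩ := zorn_subset {F | F ⊆ C ∧ F.PairwiseDisjoint f} fun c hcS hc =>
    ⟨⋃₀ c, ⟨sUnion_subset fun s hs => (hcS hs).1,
      (hc.pairwiseDisjoint_sUnion f).2 fun s hs => (hcS hs).2⟩, fun _ => subset_sUnion_of_mem⟩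
  refine ⟨F, hF.prop.1, hF.prop.2, fun c hc hne => ?_⟩
  by_contra! hdisj
  have hcF : c ∈ F := hF.mem_of_prop_insert ⟨insert_subset hc hF.prop.1,
    hF.prop.2.insert fun d hd _ => disjoint_iff_inter_eq_empty.2 (hdisj d hd)⟩
  exact hne.ne_empty (by simpa using hdisj c hcF)

namespace BranchTree

variable {Z S : Type*} [TopologicalSpace Z] (Good : S → Prop) (R : S → Set Z → S → Prop)

def children (ν : Set Z × S) : Set (Set Z × S) :=
  {μ | IsOpen μ.1 ∧ μ.1.Nonempty ∧ μ.1 ⊆ ν.1 ∧ Good μ.2 ∧ R ν.2 μ.1 μ.2}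

def maximalChildren (ν : Set Z × S) : Set (Set Z × S) :=
  (exists_pairwiseDisjoint_forall_inter_nonempty Prod.fst (children Good R ν)).choose

lemma maximalChildren_subset (ν : Set Z × S) : maximalChildren Good R ν ⊆ children Good R ν :=
  (exists_pairwiseDisjoint_forall_inter_nonempty _ _).choose_spec.1

lemma pairwiseDisjoint_maximalChildren (ν : Set Z × S) :
    (maximalChildren Good R ν).PairwiseDisjoint Prod.fst :=
  (exists_pairwiseDisjoint_forall_inter_nonempty _ _).choose_spec.2.1

lemma exists_maximalChildren_inter_nonempty {ν μ : Set Z × S} (hμ : μ ∈ children Good R ν) :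
    ∃ μ' ∈ maximalChildren Good R ν, (μ.1 ∩ μ'.1).Nonempty :=
  (exists_pairwiseDisjoint_forall_inter_nonempty _ _).choose_spec.2.2 μ hμ hμ.2.1

def level (root : S) : ℕ → Set (Set Z × S)
  | 0 => {(univ, root)}
  | n + 1 => ⋃ ν ∈ level root n, maximalChildren Good R ν

variable {Good R} {root : S}

lemma isOpen_and_good_of_mem_level (hroot : Good root) :
    ∀ {n : ℕ} {μ : Set Z × S}, μ ∈ level Good R root n → IsOpen μ.1 ∧ Good μ.2
  | 0, _, rfl => ⟨isOpen_univ, hroot⟩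
  | _ + 1, _, hμ => by
    obtain ⟨ν, -, hμν⟩ := mem_iUnion₂.1 hμ
    have hμ := maximalChildren_subset Good R ν hμν
    exact ⟨hμ.1, hμ.2.2.2.1⟩

lemma pairwiseDisjoint_level : ∀ n, (level Good R root n).PairwiseDisjoint Prod.fst
  | 0 => pairwiseDisjoint_singleton _ _
  | n + 1 => by
    refine PairwiseDisjoint.biUnion ((pairwiseDisjoint_level n).mono_on fun ν _ => ?_)
      fun ν _ => pairwiseDisjoint_maximalChildren Good R ν
    exact iSup₂_le fun μ hμ => (maximalChildren_subset Good R ν hμ).2.2.1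

variable (hroot : Good root)
  (hext : ∀ s, Good s → ∀ O : Set Z, IsOpen O → O.Nonempty →
    ∃ H ⊆ O, IsOpen H ∧ H.Nonempty ∧ ∃ s', Good s' ∧ R s H s')
include hroot hext

lemma exists_mem_level_inter_nonempty {O : Set Z} (hO : IsOpen O) (hOne : O.Nonempty) :
    ∀ n, ∃ μ ∈ level Good R root n, (O ∩ μ.1).Nonempty
  | 0 => ⟨_, rfl, by simpa using hOne⟩
  | n + 1 => by
    obtain ⟨ν, hν, hOν⟩ := exists_mem_level_inter_nonempty hO hOne n
    obtain ⟨hνo, hνg⟩ := isOpen_and_good_of_mem_level hroot hν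
    obtain ⟨H, hHO, hHo, hHne, s', hs', hR⟩ := hext ν.2 hνg _ (hO.inter hνo) hOν
    have hchild : (H, s') ∈ children Good R ν :=
      ⟨hHo, hHne, hHO.trans inter_subset_right, hs', hR⟩
    obtain ⟨μ, hμ, hHμ⟩ := exists_maximalChildren_inter_nonempty Good R hchild
    exact ⟨μ, mem_iUnion₂.2 ⟨ν, hν, hμ⟩, hHμ.mono (inter_subset_inter_left _
      (hHO.trans inter_subset_left))⟩

lemma dense_level (n : ℕ) : Dense (⋃ μ ∈ level Good R root n, μ.1) := by
  refine dense_iff_inter_open.2 fun O hO hOne => ?_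
  obtain ⟨μ, hμ, x, hxO, hxμ⟩ := exists_mem_level_inter_nonempty hroot hext hO hOne n
  exact ⟨x, hxO, mem_iUnion₂.2 ⟨μ, hμ, hxμ⟩⟩

theorem eventually_residual_exists_branch :
    ∀ᶠ x in residual Z, ∃ s : ℕ → S, ∀ n, Good (s n) ∧ ∃ H, x ∈ H ∧ R (s n) H (s (n + 1)) := by
  have hlevels : ∀ᶠ x in residual Z, ∀ n, x ∈ ⋃ μ ∈ level Good R root n, μ.1 :=
    eventually_countable_forall.2 fun n => residual_of_dense_open
      (isOpen_biUnion fun _ hμ => (isOpen_and_good_of_mem_level hroot hμ).1)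
      (dense_level hroot hext n)
  filter_upwards [hlevels] with x hx
  choose ν hν hxν using fun n => mem_iUnion₂.1 (hx n)
  refine ⟨fun n => (ν n).2, fun n =>
    ⟨(isOpen_and_good_of_mem_level hroot (hν n)).2, (ν (n + 1)).1, hxν (n + 1), ?_⟩⟩
  obtain ⟨π, hπ, hνπ⟩ := mem_iUnion₂.1 (hν (n + 1))
  have hchild := maximalChildren_subset Good R π hνπ
  -- the parent of `ν (n + 1)` contains `x`, so it is the unique node of level `n` containing `x`
  obtain rfl : π = ν n := (pairwiseDisjoint_level n).elim_set hπ (hν n) x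
    (hchild.2.2.1 (hxν (n + 1))) (hxν n)
  exact hchild.2.2.2.2

end BranchTree

section OpenOpenGame

variable {W : Type*}

/-- The history of the play in which Player II answers every move `A` of `σ` by `u '' A`. -/
def responseHistory (σ : List (Set (Set W)) → Set (Set W)) (u : Set W → Set W) :
    ℕ → List (Set (Set W))
  | 0 => []
  | n + 1 => responseHistory σ u n ++ [u '' σ (responseHistory σ u n)]

lemma map_range_responseHistory (σ : List (Set (Set W)) → Set (Set W)) (u : Set W → Set W) :
    ∀ n, (List.range n).map (fun k => u '' σ (responseHistory σ u k)) = responseHistory σ u n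
  | 0 => rfl
  | n + 1 => by
    rw [List.range_succ, List.map_append, map_range_responseHistory σ u n]
    rfl

def IsClosedUnderStrategy (σ : List (Set (Set W)) → Set (Set W)) (P : Set (Set W)) : Prop :=
  ∀ l : List (Set (Set W)), (∀ A ∈ l, A ⊆ P ∧ A.Finite) → σ l ⊆ P

variable [TopologicalSpace W]

def IsWinningIStrategy (σ : List (Set (Set W)) → Set (Set W)) : Prop :=
  (∀ hist, IMove W (σ hist)) ∧
    ∀ B : ℕ → Set (Set W), (∀ n, IIMove W (σ ((List.range n).map B)) (B n)) →
      ∀ k, Dense (⋃ (n : ℕ) (_ : k ≤ n), ⋃₀ B n)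

lemma iFavorable_iff :
    IFavorable W ↔ ∃ σ : List (Set (Set W)) → Set (Set W), IsWinningIStrategy σ :=
  Iff.rfl

/-- The last clause of `IsClubFilter`, for a single family. -/
def ForcesOpens (P : Set (Set W)) : Prop :=
  ∀ V : Set W, IsOpen V → V.Nonempty → ∃ U ∈ P, ∀ U' ∈ P, U' ⊆ U → (U' ∩ V).Nonempty

lemma IsWinningIStrategy.forcesOpens {σ : List (Set (Set W)) → Set (Set W)}
    (hσ : IsWinningIStrategy σ) {P : Set (Set W)} (hP : ∀ U ∈ P, IsOpen U ∧ U.Nonempty)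
    (hclosed : IsClosedUnderStrategy σ P) : ForcesOpens P := by
  intro V hV hVne
  by_contra! hcon
  choose! u huP husub huV using hcon
  set hist := responseHistory σ u
  have hhist : ∀ n, ∀ A ∈ hist n, A ⊆ P ∧ A.Finite := by
    intro n
    induction n with
    | zero => simp [hist, responseHistory]
    | succ n ih =>
      simp only [hist, responseHistory, List.mem_append, List.mem_singleton]
      rintro A (hA | rfl)
      · exact ih A hA
      · exact ⟨image_subset_iff.2 fun U hU => huP U (hclosed _ ih hU),
          ((hσ.1 _).1).image u⟩
  have hσP : ∀ n, σ (hist n) ⊆ P := fun n => hclosed _ (hhist n)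
  have hvalid : ∀ n, IIMove W (σ ((List.range n).map fun k => u '' σ (hist k)))
      (u '' σ (hist n)) := by
    intro n
    rw [map_range_responseHistory]
    refine ⟨⟨(hσ.1 _).1.image u, ?_⟩, fun U hU => ⟨u U, mem_image_of_mem u hU, husub U (hσP n hU)⟩⟩
    rintro _ ⟨U, hU, rfl⟩
    exact hP _ (huP U (hσP n hU))
  obtain ⟨y, hyV, hy⟩ := (hσ.2 _ hvalid 0).inter_open_nonempty V hV hVne
  simp only [mem_iUnion, mem_sUnion] at hy
  obtain ⟨n, -, _, ⟨U, hU, rfl⟩, hyU⟩ := hy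
  exact (huV U (hσP n hU)).subset ⟨hyU, hyV⟩

end OpenOpenGame

lemma Set.Finite.exists_finite_forall_inter_nonempty {α : Type*} {𝒮 : Set (Set α)}
    (h𝒮 : 𝒮.Finite) (hne : ∀ s ∈ 𝒮, s.Nonempty) :
    ∃ A : Set α, A.Finite ∧ A ⊆ ⋃₀ 𝒮 ∧ ∀ s ∈ 𝒮, (A ∩ s).Nonempty := by
  choose f hf using fun s : 𝒮 => hne s s.2
  have := h𝒮.to_subtype
  exact ⟨range f, finite_range f, range_subset_iff.2 fun s => ⟨s, s.2, hf s⟩,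
    fun s hs => ⟨f ⟨s, hs⟩, mem_range_self _, hf ⟨s, hs⟩⟩⟩

section Vietoris

variable {Y : Type*}

def Refines (η τ : List (Set Y)) : Prop :=
  (∀ U ∈ η, ∃ e ∈ τ, U ⊆ e) ∧ ∀ e ∈ τ, ∃ U ∈ η, U ⊆ e

variable [TopologicalSpace Y]

lemma mem_vietorisBasic {L : List (Set Y)} {A : Hyper Y} :
    A ∈ vietorisBasic L ↔ (∀ a ∈ A.1, ∃ V ∈ L, a ∈ V) ∧ ∀ V ∈ L, (A.1 ∩ V).Nonempty := by
  simp [vietorisBasic, subset_def]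

@[simp]
lemma vietorisBasic_nil : vietorisBasic ([] : List (Set Y)) = ∅ :=
  eq_empty_of_forall_notMem fun A hA => by
    obtain ⟨a, ha⟩ := A.2.2
    simpa using (mem_vietorisBasic.1 hA).1 a ha

lemma isOpen_vietorisBasic {L : List (Set Y)} (hL : ∀ V ∈ L, IsOpen V) :
    IsOpen (vietorisBasic L) := by
  rcases eq_or_ne L [] with rfl | hne
  · simp
  · exact isOpen_generateFrom_of_mem ⟨L, hne, hL, rfl⟩

lemma Refines.vietorisBasic_subset {η τ : List (Set Y)} (h : Refines η τ) :
    vietorisBasic η ⊆ vietorisBasic τ := by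
  intro A hA
  rw [mem_vietorisBasic] at hA ⊢
  refine ⟨fun a ha => ?_, fun e he => ?_⟩
  · obtain ⟨U, hU, haU⟩ := hA.1 a ha
    obtain ⟨e, he, hUe⟩ := h.1 U hU
    exact ⟨e, he, hUe haU⟩
  · obtain ⟨U, hU, hUe⟩ := h.2 e he
    exact (hA.2 U hU).mono (inter_subset_inter_right _ hUe)

open Classical in
noncomputable def commonRefinement (A : Hyper Y) (L₁ L₂ : List (Set Y)) : List (Set Y) :=
  ((L₁ ×ˢ L₂).filter fun p => (A.1 ∩ (p.1 ∩ p.2)).Nonempty).map fun p => p.1 ∩ p.2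

lemma mem_commonRefinement {A : Hyper Y} {L₁ L₂ : List (Set Y)} {U : Set Y} :
    U ∈ commonRefinement A L₁ L₂ ↔
      ∃ e₁ ∈ L₁, ∃ e₂ ∈ L₂, (A.1 ∩ (e₁ ∩ e₂)).Nonempty ∧ e₁ ∩ e₂ = U := by
  simp [commonRefinement, and_assoc]

variable {A : Hyper Y} {L₁ L₂ : List (Set Y)}

lemma mem_vietorisBasic_commonRefinement (h₁ : A ∈ vietorisBasic L₁)
    (h₂ : A ∈ vietorisBasic L₂) : A ∈ vietorisBasic (commonRefinement A L₁ L₂) := by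
  rw [mem_vietorisBasic] at h₁ h₂ ⊢
  refine ⟨fun a ha => ?_, fun U hU => ?_⟩
  · obtain ⟨e₁, he₁, ha₁⟩ := h₁.1 a ha
    obtain ⟨e₂, he₂, ha₂⟩ := h₂.1 a ha
    exact ⟨e₁ ∩ e₂, mem_commonRefinement.2 ⟨e₁, he₁, e₂, he₂, ⟨a, ha, ha₁, ha₂⟩, rfl⟩, ha₁, ha₂⟩
  · obtain ⟨e₁, -, e₂, -, hA, rfl⟩ := mem_commonRefinement.1 hU
    exact hA

lemma refines_commonRefinement_left (h₁ : A ∈ vietorisBasic L₁) (h₂ : A ∈ vietorisBasic L₂) :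
    Refines (commonRefinement A L₁ L₂) L₁ := by
  refine ⟨fun U hU => ?_, fun e he => ?_⟩
  · obtain ⟨e₁, he₁, e₂, -, -, rfl⟩ := mem_commonRefinement.1 hU
    exact ⟨e₁, he₁, inter_subset_left⟩
  · obtain ⟨a, ha, hae⟩ := (mem_vietorisBasic.1 h₁).2 e he
    obtain ⟨e₂, he₂, ha₂⟩ := (mem_vietorisBasic.1 h₂).1 a ha
    exact ⟨e ∩ e₂, mem_commonRefinement.2 ⟨e, he, e₂, he₂, ⟨a, ha, hae, ha₂⟩, rfl⟩,
      inter_subset_left⟩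

lemma refines_commonRefinement_right (h₁ : A ∈ vietorisBasic L₁) (h₂ : A ∈ vietorisBasic L₂) :
    Refines (commonRefinement A L₁ L₂) L₂ := by
  refine ⟨fun U hU => ?_, fun e he => ?_⟩
  · obtain ⟨e₁, -, e₂, he₂, -, rfl⟩ := mem_commonRefinement.1 hU
    exact ⟨e₂, he₂, inter_subset_right⟩
  · obtain ⟨a, ha, hae⟩ := (mem_vietorisBasic.1 h₂).2 e he
    obtain ⟨e₁, he₁, ha₁⟩ := (mem_vietorisBasic.1 h₁).1 a ha
    exact ⟨e₁ ∩ e, mem_commonRefinement.2 ⟨e₁, he₁, e, he, ⟨a, ha, ha₁, hae⟩, rfl⟩,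
      inter_subset_right⟩

lemma isOpen_of_mem_commonRefinement (h₁ : ∀ V ∈ L₁, IsOpen V) (h₂ : ∀ V ∈ L₂, IsOpen V)
    {U : Set Y} (hU : U ∈ commonRefinement A L₁ L₂) : IsOpen U := by
  obtain ⟨e₁, he₁, e₂, he₂, -, rfl⟩ := mem_commonRefinement.1 hU
  exact (h₁ e₁ he₁).inter (h₂ e₂ he₂)

lemma isTopologicalBasis_vietorisBasic :
    IsTopologicalBasis {S : Set (Hyper Y) |
      ∃ L : List (Set Y), L ≠ [] ∧ (∀ V ∈ L, IsOpen V) ∧ S = vietorisBasic L} := by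
  refine ⟨?_, ?_, rfl⟩
  · rintro _ ⟨L₁, -, hL₁, rfl⟩ _ ⟨L₂, -, hL₂, rfl⟩ A ⟨h₁, h₂⟩
    have hA := mem_vietorisBasic_commonRefinement h₁ h₂
    refine ⟨_, ⟨_, ?_, fun U => isOpen_of_mem_commonRefinement hL₁ hL₂, rfl⟩, hA,
      subset_inter (refines_commonRefinement_left h₁ h₂).vietorisBasic_subset
        (refines_commonRefinement_right h₁ h₂).vietorisBasic_subset⟩
    rintro h
    simp [h] at hA
  · refine eq_univ_of_forall fun A => ⟨_, ⟨[univ], by simp, by simp, rfl⟩, ?_⟩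
    simpa [mem_vietorisBasic] using A.2.2

end Vietoris

section VietorisT1

variable {Y : Type*} [TopologicalSpace Y] [T1Space Y]

lemma inter_vietorisBasic_nonempty {G η : List (Set Y)} (hη : η ≠ [])
    (hηG : ∀ U ∈ η, ∃ e ∈ G, (U ∩ e).Nonempty) (hGη : ∀ e ∈ G, ∃ U ∈ η, (U ∩ e).Nonempty) :
    (vietorisBasic G ∩ vietorisBasic η).Nonempty := by
  set 𝒮 : Set (Set Y) := {s ∈ image2 (· ∩ ·) {U | U ∈ η} {e | e ∈ G} | s.Nonempty}
  have h𝒮 : 𝒮.Finite := ((List.finite_toSet η).image2 _ (List.finite_toSet G)).sep _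
  -- a finite set with a point in each nonempty `U ∩ e` lies in both basic sets
  obtain ⟨A, hAfin, hA𝒮, hAmeets⟩ := h𝒮.exists_finite_forall_inter_nonempty fun s hs => hs.2
  have hmeets {U e} (hU : U ∈ η) (he : e ∈ G) (hUe : (U ∩ e).Nonempty) : (A ∩ (U ∩ e)).Nonempty :=
    hAmeets _ ⟨mem_image2_of_mem hU he, hUe⟩
  have hAne : A.Nonempty := by
    obtain ⟨U, hU⟩ := List.exists_mem_of_ne_nil η hη
    obtain ⟨e, he, hUe⟩ := hηG U hU
    exact (hmeets hU he hUe).left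
  have hcover : ∀ a ∈ A, ∃ U ∈ η, ∃ e ∈ G, a ∈ U ∧ a ∈ e := by
    intro a ha
    obtain ⟨_, ⟨⟨U, hU, e, he, rfl⟩, -⟩, haUe⟩ := hA𝒮 ha
    exact ⟨U, hU, e, he, haUe⟩
  refine ⟨⟨A, hAfin.isClosed, hAne⟩, mem_vietorisBasic.2 ⟨fun a ha => ?_, fun e he => ?_⟩,
    mem_vietorisBasic.2 ⟨fun a ha => ?_, fun U hU => ?_⟩⟩
  · obtain ⟨U, -, e, he, -, hae⟩ := hcover a ha
    exact ⟨e, he, hae⟩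
  · obtain ⟨U, hU, hUe⟩ := hGη e he
    exact (hmeets hU he hUe).mono (inter_subset_inter_right _ inter_subset_right)
  · obtain ⟨U, hU, e, -, haU, -⟩ := hcover a ha
    exact ⟨U, hU, haU⟩
  · obtain ⟨e, he, hUe⟩ := hηG U hU
    exact (hmeets hU he hUe).mono (inter_subset_inter_right _ inter_subset_left)

lemma vietorisBasic_nonempty {τ : List (Set Y)} (hτ : τ ≠ []) (hτne : ∀ e ∈ τ, e.Nonempty) :
    (vietorisBasic τ).Nonempty :=
  (inter_vietorisBasic_nonempty hτ (fun e he => ⟨e, he, by simpa using hτne e he⟩)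
    fun e he => ⟨e, he, by simpa using hτne e he⟩).mono inter_subset_left

lemma dense_of_forall_exists_refines {P : Set (Set Y)} {S : Set (Hyper Y)} (hP : ForcesOpens P)
    (hS : ∀ τ : List (Set Y), τ ≠ [] → (∀ e ∈ τ, e ∈ P) →
      ∃ η, (∀ U ∈ η, U ∈ P) ∧ Refines η τ ∧ vietorisBasic η ⊆ S) :
    Dense S := by
  refine dense_iff_inter_open.2 fun O hO ⟨A₀, hA₀⟩ => ?_
  obtain ⟨_, ⟨G, hG, hGo, rfl⟩, hA₀G, hGO⟩ :=
    isTopologicalBasis_vietorisBasic.exists_subset_of_mem_open hA₀ hO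
  have hforce : ∀ e ∈ G, ∃ w ∈ P, ∀ U ∈ P, U ⊆ w → (U ∩ e).Nonempty := fun e he =>
    hP e (hGo e he) ((mem_vietorisBasic.1 hA₀G).2 e he).right
  choose! w hwP hw using hforce
  obtain ⟨η, hηP, hητ, hηS⟩ := hS (G.map w) (by simpa using hG) (by simpa using hwP)
  have hηG : ∀ U ∈ η, ∃ e ∈ G, (U ∩ e).Nonempty := by
    intro U hU
    obtain ⟨_, hwe, hUw⟩ := hητ.1 U hU
    obtain ⟨e, he, rfl⟩ := List.mem_map.1 hwe
    exact ⟨e, he, hw e he U (hηP U hU) hUw⟩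
  have hGη : ∀ e ∈ G, ∃ U ∈ η, (U ∩ e).Nonempty := by
    intro e he
    obtain ⟨U, hU, hUw⟩ := hητ.2 (w e) (List.mem_map_of_mem he)
    exact ⟨U, hU, hw e he U (hηP U hU) hUw⟩
  have hη : η ≠ [] := by
    obtain ⟨e, he⟩ := List.exists_mem_of_ne_nil G hG
    obtain ⟨U, hU, -⟩ := hGη e he
    exact List.ne_nil_of_mem hU
  obtain ⟨A, hAG, hAη⟩ := inter_vietorisBasic_nonempty hη hηG hGη
  exact ⟨A, hGO hAG, hηS hAη⟩

end VietorisT1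

section Resolution

variable {Z Y : Type*} [TopologicalSpace Y] (D : Set (Z × Hyper Y))

def Resolves (H : Set Z) (E : Set (Set Y)) (τ : List (Set Y)) : Prop :=
  ∃ η : List (Set Y), (∀ U ∈ η, U ∈ E) ∧ Refines η τ ∧ H ×ˢ vietorisBasic η ⊆ D

variable {D}

lemma Resolves.mono {H H' : Set Z} {E E' : Set (Set Y)} {τ : List (Set Y)} (hH : H' ⊆ H)
    (hE : E ⊆ E') (h : Resolves D H E τ) : Resolves D H' E' τ := by
  obtain ⟨η, hηE, hητ, hηD⟩ := h
  exact ⟨η, fun U hU => hE (hηE U hU), hητ, (prod_mono hH subset_rfl).trans hηD⟩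

variable [TopologicalSpace Z] [T1Space Y] (hDo : IsOpen D) (hDd : Dense D)
include hDo hDd

lemma exists_resolves {O : Set Z} (hO : IsOpen O) (hOne : O.Nonempty) {τ : List (Set Y)}
    (hτ : τ ≠ []) (hτo : ∀ e ∈ τ, IsOpen e ∧ e.Nonempty) :
    ∃ H ⊆ O, IsOpen H ∧ H.Nonempty ∧ ∃ E : Set (Set Y), E.Finite ∧
      (∀ U ∈ E, IsOpen U ∧ U.Nonempty) ∧ Resolves D H E τ := by
  have hbox : (O ×ˢ vietorisBasic τ).Nonempty :=
    hOne.prod (vietorisBasic_nonempty hτ fun e he => (hτo e he).2)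
  obtain ⟨⟨x, A⟩, ⟨hxO, hAτ⟩, hxA⟩ := hDd.inter_open_nonempty _
    (hO.prod (isOpen_vietorisBasic fun e he => (hτo e he).1)) hbox
  obtain ⟨u, v, hu, hv, hxu, hAv, huv⟩ := isOpen_prod_iff.1 hDo x A hxA
  obtain ⟨_, ⟨L, -, hL, rfl⟩, hAL, hLv⟩ :=
    isTopologicalBasis_vietorisBasic.exists_subset_of_mem_open hAv hv
  have hAη := mem_vietorisBasic_commonRefinement hAL hAτ
  refine ⟨u ∩ O, inter_subset_right, hu.inter hO, ⟨x, hxu, hxO⟩,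
    {U | U ∈ commonRefinement A L τ}, List.finite_toSet _, fun U hU =>
      ⟨isOpen_of_mem_commonRefinement hL (fun e he => (hτo e he).1) hU,
        ((mem_vietorisBasic.1 hAη).2 U hU).right⟩,
    _, fun _ => id, refines_commonRefinement_right hAL hAτ, ?_⟩
  rintro ⟨x', B⟩ ⟨hx', hB⟩
  exact huv ⟨hx'.1, hLv ((refines_commonRefinement_left hAL hAτ).vietorisBasic_subset hB)⟩

lemma exists_resolves_of_finite {O : Set Z} (hO : IsOpen O) (hOne : O.Nonempty)
    {T : Set (List (Set Y))} (hT : T.Finite)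
    (hTo : ∀ τ ∈ T, τ ≠ [] ∧ ∀ e ∈ τ, IsOpen e ∧ e.Nonempty) :
    ∃ H ⊆ O, IsOpen H ∧ H.Nonempty ∧ ∃ E : Set (Set Y), E.Finite ∧
      (∀ U ∈ E, IsOpen U ∧ U.Nonempty) ∧ ∀ τ ∈ T, Resolves D H E τ := by
  induction T, hT using Set.Finite.induction_on with
  | empty => exact ⟨O, subset_rfl, hO, hOne, ∅, finite_empty, by simp, by simp⟩
  | @insert τ T _ _ ih =>
    obtain ⟨H₁, hH₁O, hH₁, hH₁ne, E₁, hE₁, hE₁o, hres₁⟩ :=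
      ih fun τ' hτ' => hTo τ' (mem_insert_of_mem _ hτ')
    obtain ⟨H, hHH₁, hH, hHne, E₂, hE₂, hE₂o, hres₂⟩ :=
      exists_resolves hDo hDd hH₁ hH₁ne (hTo τ (mem_insert _ _)).1 (hTo τ (mem_insert _ _)).2
    refine ⟨H, hHH₁.trans hH₁O, hH, hHne, E₁ ∪ E₂, hE₁.union hE₂,
      fun U hU => hU.elim (hE₁o U) (hE₂o U), ?_⟩
    rintro τ' (rfl | hτ')
    · exact hres₂.mono subset_rfl subset_union_right
    · exact (hres₁ τ' hτ').mono hHH₁ subset_union_left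

end Resolution

def boundedLists {α : Type*} (T : Set α) (k : ℕ) : Set (List α) :=
  {l | l.length ≤ k ∧ ∀ a ∈ l, a ∈ T}

lemma Set.Finite.boundedLists {α : Type*} {T : Set α} (hT : T.Finite) (k : ℕ) :
    (boundedLists T k).Finite := by
  have := hT.to_subtype
  refine ((List.finite_length_le T k).image (List.map Subtype.val)).subset ?_
  rintro l ⟨hl, hlT⟩
  lift l to List T using hlT
  exact ⟨l, by simpa using hl, rfl⟩

lemma eventually_mem_boundedLists {α : Type*} {T : ℕ → Set α} (hT : Monotone T) {b : ℕ → ℕ}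
    (hb : Tendsto b atTop atTop) {l : List α} (hl : ∀ a ∈ l, a ∈ ⋃ n, T n) :
    ∀ᶠ n in atTop, l ∈ boundedLists (T n) (b n) := by
  refine (hb.eventually_ge_atTop l.length).and ((eventually_all_finite (List.finite_toSet l)).2
    fun a ha => ?_)
  obtain ⟨m, hm⟩ := mem_iUnion.1 (hl a ha)
  exact eventually_atTop.2 ⟨m, fun n hn => hT hn hm⟩

/-- The finitely many open sets recorded at a node of the construction; `bound` limits the length
of the lists of them that are dealt with at the next step. -/
structure Stock (Y : Type*) where
  sets : Set (Set Y)
  bound : ℕ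

namespace Stock

variable {Y Z : Type*} [TopologicalSpace Y]

def IsGood (s : Stock Y) : Prop :=
  s.sets.Finite ∧ ∀ U ∈ s.sets, IsOpen U ∧ U.Nonempty

def probes (s : Stock Y) : Set (List (Set Y)) :=
  {τ ∈ boundedLists s.sets s.bound | τ ≠ []}

def hull (σ : List (Set (Set Y)) → Set (Set Y)) (s : Stock Y) : Set (Set Y) :=
  ⋃ l ∈ boundedLists (𝒫 s.sets) s.bound, σ l

def Step (σ : List (Set (Set Y)) → Set (Set Y)) (D : Set (Z × Hyper Y)) (s : Stock Y) (H : Set Z)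
    (s' : Stock Y) : Prop :=
  s'.bound = s.bound + 1 ∧ s.sets ∪ s.hull σ ⊆ s'.sets ∧ ∀ τ ∈ s.probes, Resolves D H s'.sets τ

variable {σ : List (Set (Set Y)) → Set (Set Y)}

section Step

variable {s : Stock Y}

lemma IsGood.finite_hull (hσ : IsWinningIStrategy σ) (hs : s.IsGood) : (s.hull σ).Finite :=
  (hs.1.powerset.boundedLists _).biUnion fun l _ => (hσ.1 l).1

lemma isOpen_nonempty_of_mem_hull (hσ : IsWinningIStrategy σ) {U : Set Y} (hU : U ∈ s.hull σ) :
    IsOpen U ∧ U.Nonempty := by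
  obtain ⟨l, -, hUl⟩ := mem_iUnion₂.1 hU
  exact (hσ.1 l).2 U hUl

variable [TopologicalSpace Z] [T1Space Y] {D : Set (Z × Hyper Y)}

lemma exists_step (hσ : IsWinningIStrategy σ) (hDo : IsOpen D) (hDd : Dense D) (hs : s.IsGood)
    {O : Set Z} (hO : IsOpen O) (hOne : O.Nonempty) :
    ∃ H ⊆ O, IsOpen H ∧ H.Nonempty ∧ ∃ s' : Stock Y, s'.IsGood ∧ s.Step σ D H s' := by
  obtain ⟨H, hHO, hH, hHne, E, hE, hEo, hres⟩ := exists_resolves_of_finite hDo hDd hO hOne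
    ((hs.1.boundedLists s.bound).subset (sep_subset _ _)) fun τ hτ =>
      ⟨hτ.2, fun e he => hs.2 e (hτ.1.2 e he)⟩
  refine ⟨H, hHO, hH, hHne, ⟨s.sets ∪ s.hull σ ∪ E, s.bound + 1⟩,
    ⟨(hs.1.union (hs.finite_hull hσ)).union hE, ?_⟩, rfl, subset_union_left,
    fun τ hτ => (hres τ hτ).mono subset_rfl subset_union_right⟩
  rintro U ((hU | hU) | hU)
  exacts [hs.2 U hU, isOpen_nonempty_of_mem_hull hσ hU, hEo U hU]

end Step

section Branch

variable {D : Set (Z × Hyper Y)} {x : Z} {s : ℕ → Stock Y}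
  (hs : ∀ n, (s n).IsGood ∧ ∃ H, x ∈ H ∧ (s n).Step σ D H (s (n + 1)))
include hs

lemma monotone_sets : Monotone fun n => (s n).sets :=
  monotone_nat_of_le_succ fun n => by
    obtain ⟨-, H, -, -, hsub, -⟩ := hs n
    exact subset_union_left.trans hsub

lemma tendsto_bound : Tendsto (fun n => (s n).bound) atTop atTop := by
  have hle : ∀ n, n ≤ (s n).bound := by
    intro n
    induction n with
    | zero => exact Nat.zero_le _
    | succ n ih =>
      obtain ⟨-, H, -, hbound, -⟩ := hs n
      omega
  exact tendsto_atTop_mono hle tendsto_id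

lemma isClosedUnderStrategy_iUnion_sets : IsClosedUnderStrategy σ (⋃ n, (s n).sets) := by
  intro l hl
  have hlP : ∀ A ∈ l, A ∈ ⋃ n, 𝒫 (s n).sets := fun A hA => by
    obtain ⟨n, hn⟩ := ((eventually_all_finite (hl A hA).2).2 fun U hU =>
      eventually_atTop.2 (by
        obtain ⟨m, hm⟩ := mem_iUnion.1 ((hl A hA).1 hU)
        exact ⟨m, fun n hn => monotone_sets hs hn hm⟩)).exists
    exact mem_iUnion.2 ⟨n, hn⟩
  obtain ⟨n, hn⟩ := (eventually_mem_boundedLists (fun _ _ hmn => powerset_mono.2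
    (monotone_sets hs hmn)) (tendsto_bound hs) hlP).exists
  obtain ⟨-, H, -, -, hsub, -⟩ := hs n
  exact ((subset_biUnion_of_mem hn).trans (subset_union_right.trans hsub)).trans
    (subset_iUnion (fun n => (s n).sets) (n + 1))

variable [T1Space Y]

lemma dense_slice (hσ : IsWinningIStrategy σ) : Dense {z : Hyper Y | (x, z) ∈ D} := by
  have hgood : ∀ U ∈ ⋃ n, (s n).sets, IsOpen U ∧ U.Nonempty := fun U hU => by
    obtain ⟨n, hn⟩ := mem_iUnion.1 hU
    exact (hs n).1.2 U hn
  refine dense_of_forall_exists_refines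
    (hσ.forcesOpens hgood (isClosedUnderStrategy_iUnion_sets hs)) fun τ hτ hτP => ?_
  obtain ⟨n, hn⟩ := (eventually_mem_boundedLists (monotone_sets hs) (tendsto_bound hs) hτP).exists
  obtain ⟨-, H, hxH, -, -, hres⟩ := hs n
  obtain ⟨η, hηs, hητ, hηD⟩ := hres τ ⟨hn, hτ⟩
  exact ⟨η, fun U hU => mem_iUnion.2 ⟨n + 1, hηs U hU⟩, hητ, fun z hz => hηD ⟨hxH, hz⟩⟩

end Branch

end Stock

lemma IsNowhereDense.of_dense_slice_compl_closure {T W : Type*} [TopologicalSpace T]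
    [TopologicalSpace W] {E : Set (T × W)} {x : T}
    (hx : Dense {w | (x, w) ∈ (closure E)ᶜ}) : IsNowhereDense {w | (x, w) ∈ E} := by
  have hclosed : IsClosed {w | (x, w) ∈ closure E} :=
    isClosed_closure.preimage (Continuous.prodMk_right x)
  refine IsNowhereDense.mono (fun _ hw => subset_closure (s := E) hw)
    (hclosed.isNowhereDense_iff.2 ?_)
  exact interior_eq_empty_iff_dense_compl.2 hx

universe u

theorem hyper_uKUstar_general (Y : Type*) [TopologicalSpace Y]
    [T2Space Y] (hY : IFavorable Y) :
    ∀ (Z : Type u) [TopologicalSpace Z] (E : Set (Z × Hyper Y)),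
      IsNowhereDense E →
        IsMeagre {x : Z | ¬ IsNowhereDense {z : Hyper Y | (x, z) ∈ E}} := by
  intro Z _ E hE
  obtain ⟨σ, hσ⟩ := iFavorable_iff.1 hY
  have hDo : IsOpen (closure E)ᶜ := isClosed_closure.isOpen_compl
  have hDd : Dense (closure E)ᶜ := interior_eq_empty_iff_dense_compl.1 hE
  have hbranch := BranchTree.eventually_residual_exists_branch (root := (⟨∅, 0⟩ : Stock Y))
    (R := Stock.Step σ (closure E)ᶜ) ⟨finite_empty, by simp⟩
    fun s hs O hO hOne => Stock.exists_step hσ hDo hDd hs hO hOne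
  refine hbranch.mono fun x ⟨s, hs⟩ => ?_
  simpa using IsNowhereDense.of_dense_slice_compl_closure (Stock.dense_slice hs hσ)

/-- If a compact Hausdorff space `Y` is I-favorable, then the hyperspace
`exp Y` with the Vietoris topology is universally Kuratowski-Ulam*. -/
theorem hyper_uKUstar (Y : Type*) [TopologicalSpace Y] [CompactSpace Y]
    [T2Space Y] (hY : IFavorable Y) :
    ∀ (Z : Type u) [TopologicalSpace Z] (E : Set (Z × Hyper Y)),
      IsNowhereDense E →
        IsMeagre {x : Z | ¬ IsNowhereDense {z : Hyper Y | (x, z) ∈ E}} :=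
  hyper_uKUstar_general Y hY
end
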